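/- arXiv:2001.08254 — 8 statements merged into one kernel-verified Lean document; each statement's English description precedes it below -/
import Mathlib

section
/- Let M and N be real Hilbert spaces, a: M×M→ℝ a bounded symmetric bilinear form with a(u,φ) ≤ C_a‖u‖_M‖φ‖_M and coercive: a(u,u) ≥ γ_a‖u‖_M² for all u ∈ M. Let b: M×N→ℝ satisfy b(u,p) ≤ C_b‖u‖_M·|p|_e and the inf-sup condition sup_{u∈M} b(u,q)/‖u‖_M ≥ γ_b|q|_e for all q ∈ N, where |·|_e is a seminorm on N vanishing only on the kernel K = {p ∈ N : b(φ,p)=0 ∀φ∈M}. Let c: N×N→ℝ be symmetric positive semi-definite with c(q,q) > 0 for all q ∈ K\{0}. Define L(u,p;φ,q) = a(u,φ) + b(φ,p) + b(u,q) − c(p,q) and ‖q‖_N² = |q̄|_e² + c(q,q), where q̄ is the component of q orthogonal to K. Then L satisfies the Babuška inf-sup condition: there is a constant β > 0 depending only on C_a, C_b, γ_a, γ_b such that for all (u,p) ∈ M×N, sup_{(φ,q)∈M×N} L(u,p;φ,q)/(‖φ‖_M² + ‖q‖_N²)^{1/2} ≥ β(‖u‖_M² + ‖p‖_N²)^{1/2}.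 -/
/-!
Testing `L(u,p;·,·)` against `(u, -p)` makes the two `b`-terms cancel and gives
`γa ‖u‖² + c(p,p) ≤ s R`, where `R = ‖(u,p)‖`. Testing against `(φ, 0)` and using the bound on
`a` gives `b(φ, p̄) = b(φ, p) ≤ (s + Ca ‖u‖) ‖φ‖`, so the inf-sup condition yields
`γb |p̄|_e ≤ s + Ca ‖u‖`. Squaring the latter and combining the two estimates gives
`A R² ≤ B s R + C s²` with `A = γa γb²`, `B = γb² + γa γb² + 2 Ca²`, `C = 2 γa`,
hence `A R ≤ (A + B + C) s`. Since `K ⊓ Kᗮ = ⊥`, the projection `q ↦ q̄` is homogeneous, which is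
what makes `(u, -p)` have the same norm as `(u, p)`.
-/

open scoped RealInnerProductSpace

section Projection

variable {𝕜 N : Type*} [RCLike 𝕜] [NormedAddCommGroup N] [InnerProductSpace 𝕜 N]
  {K : Submodule 𝕜 N} {proj : N → N}

theorem eq_of_sub_mem_of_mem_orthogonal {x y : N} (hxy : x - y ∈ K) (hx : x ∈ Kᗮ) (hy : y ∈ Kᗮ) :
    x = y :=
  sub_eq_zero.mp <| Submodule.disjoint_def.mp K.orthogonal_disjoint _ hxy (Kᗮ.sub_mem hx hy)

theorem map_smul_of_sub_mem_of_mem_orthogonal (hK : ∀ q, q - proj q ∈ K)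
    (hKo : ∀ q, proj q ∈ Kᗮ) (t : 𝕜) (q : N) : proj (t • q) = t • proj q := by
  refine eq_of_sub_mem_of_mem_orthogonal ?_ (hKo _) (Kᗮ.smul_mem t (hKo q))
  convert K.sub_mem (K.smul_mem t (hK q)) (hK (t • q)) using 1
  rw [smul_sub]; abel

end Projection

noncomputable def babuskaConstant (Ca γa γb : ℝ) : ℝ :=
  γa * γb ^ 2 / (2 * γa * γb ^ 2 + γb ^ 2 + 2 * Ca ^ 2 + 2 * γa)

theorem babuskaConstant_pos {Ca γa γb : ℝ} (hγa : 0 < γa) (hγb : 0 < γb) :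
    0 < babuskaConstant Ca γa γb := by
  unfold babuskaConstant; positivity

theorem mul_le_of_sq_le_add {A B C R s : ℝ} (hA : 0 ≤ A) (hB : 0 ≤ B) (hC : 0 ≤ C)
    (hR : 0 ≤ R) (hs : 0 ≤ s) (h : A * R ^ 2 ≤ B * (s * R) + C * s ^ 2) :
    A * R ≤ (A + B + C) * s := by
  rcases le_total R s with hRs | hsR
  · nlinarith [mul_le_mul_of_nonneg_left hRs hA, mul_nonneg (add_nonneg hB hC) hs]
  · rcases hR.eq_or_lt with rfl | hRpos
    · simp only [mul_zero]; positivity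
    · have hCs : C * s ^ 2 ≤ C * s * R := by nlinarith [mul_nonneg hC hs]
      have hRs : A * R ≤ (B + C) * s := le_of_mul_le_mul_right (by nlinarith) hRpos
      nlinarith [mul_nonneg hA hs]

theorem babuskaConstant_mul_le {Ca γa γb x y z s : ℝ} (hγa : 0 < γa) (hγb : 0 < γb)
    (hx : 0 ≤ x) (hy : 0 ≤ y) (hz : 0 ≤ z)
    (hcoer : γa * x ^ 2 + z ≤ s * √(x ^ 2 + (y ^ 2 + z)))
    (hinfsup : γb * y ≤ s + Ca * x) :
    babuskaConstant Ca γa γb * √(x ^ 2 + (y ^ 2 + z)) ≤ s := by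
  set R := √(x ^ 2 + (y ^ 2 + z))
  have hR : 0 ≤ R := Real.sqrt_nonneg _
  have hR2 : R ^ 2 = x ^ 2 + (y ^ 2 + z) := Real.sq_sqrt (by positivity)
  have hs : 0 ≤ s := by
    rcases hR.eq_or_lt with hR0 | hRpos
    · have hx0 : x = 0 := by nlinarith
      subst hx0; nlinarith
    · exact nonneg_of_mul_nonneg_left (by nlinarith) hRpos
  have hy2 : γb ^ 2 * y ^ 2 ≤ 2 * s ^ 2 + 2 * Ca ^ 2 * x ^ 2 := by
    nlinarith [mul_self_le_mul_self (mul_nonneg hγb.le hy) hinfsup, sq_nonneg (s - Ca * x)]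
  have hquad : γa * γb ^ 2 * R ^ 2
      ≤ (γb ^ 2 + γa * γb ^ 2 + 2 * Ca ^ 2) * (s * R) + 2 * γa * s ^ 2 := by
    rw [hR2]; nlinarith [mul_nonneg hγa.le (sq_nonneg x), mul_nonneg hγa.le (sq_nonneg γb)]
  have hlin := mul_le_of_sq_le_add (by positivity) (by positivity) (by positivity) hR hs hquad
  rw [babuskaConstant, div_mul_eq_mul_div, div_le_iff₀ (by positivity)]
  linarith

theorem stmt0_general
    {M N : Type*}
    [NormedAddCommGroup M] [InnerProductSpace ℝ M]
    [NormedAddCommGroup N] [InnerProductSpace ℝ N]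
    (a : M →ₗ[ℝ] M →ₗ[ℝ] ℝ) (b : M →ₗ[ℝ] N →ₗ[ℝ] ℝ) (c : N →ₗ[ℝ] N →ₗ[ℝ] ℝ)
    (e : N → ℝ)
    (Ca γa γb : ℝ)
    (hγa : 0 < γa) (hγb : 0 < γb)
    -- |·|_e is a seminorm on N ...
    (he_nonneg : ∀ q, 0 ≤ e q)
    (he_smul : ∀ (t : ℝ) (q : N), e (t • q) = |t| * e q)
    -- a is symmetric, bounded and coercive on M
    (ha_bound : ∀ u φ, a u φ ≤ Ca * ‖u‖ * ‖φ‖)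
    (ha_coercive : ∀ u, γa * ‖u‖ ^ 2 ≤ a u u)
    -- b is bounded and satisfies the inf-sup condition with respect to |·|_e
    (hb_infsup : ∀ q : N, ∀ s : ℝ, (∀ u : M, b u q ≤ s * ‖u‖) → γb * e q ≤ s)
    -- c is symmetric positive semi-definite, positive on K \ {0}
    (hc_psd : ∀ q, 0 ≤ c q q)
    -- proj q is the component of q orthogonal to K
    (proj : N → N)
    (hproj_ker : ∀ (q : N) (φ : M), b φ (q - proj q) = 0)
    (hproj_orth : ∀ q k : N, (∀ φ : M, b φ k = 0) → ⟪proj q, k⟫ = 0) :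
    ∃ β > 0, ∀ (u : M) (p : N) (s : ℝ),
      (∀ (φ : M) (q : N), a u φ + b φ p + b u q - c p q ≤
          s * Real.sqrt (‖φ‖ ^ 2 + (e (proj q) ^ 2 + c q q))) →
      β * Real.sqrt (‖u‖ ^ 2 + (e (proj p) ^ 2 + c p p)) ≤ s := by
  refine ⟨babuskaConstant Ca γa γb, babuskaConstant_pos hγa hγb, fun u p s hL ↦ ?_⟩
  have hK (q : N) : q - proj q ∈ LinearMap.ker b.flip := LinearMap.ext (hproj_ker q)
  have hKo (q : N) : proj q ∈ (LinearMap.ker b.flip)ᗮ :=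
    (Submodule.mem_orthogonal' _ _).mpr fun k hk ↦ hproj_orth q k (LinearMap.ext_iff.mp hk)
  have hproj (t : ℝ) (q : N) := map_smul_of_sub_mem_of_mem_orthogonal hK hKo t q
  have hproj_neg : proj (-p) = -proj p := by simpa using hproj (-1) p
  have hproj_zero : proj 0 = 0 := by simpa using hproj 0 0
  have he_neg (q : N) : e (-q) = e q := by simpa using he_smul (-1) q
  have he_zero : e 0 = 0 := by simpa using he_smul 0 0
  have hcoer : γa * ‖u‖ ^ 2 + c p p ≤ s * √(‖u‖ ^ 2 + (e (proj p) ^ 2 + c p p)) := by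
    have hL' := hL u (-p)
    simp only [map_neg, LinearMap.neg_apply, neg_neg, hproj_neg, he_neg] at hL'
    linarith [ha_coercive u]
  have hinfsup : γb * e (proj p) ≤ s + Ca * ‖u‖ := by
    refine hb_infsup _ _ fun φ ↦ ?_
    have hbproj : b φ (proj p) = b φ p :=
      (sub_eq_zero.mp (by rw [← map_sub]; exact hproj_ker p φ)).symm
    have hφ := hL φ 0
    simp only [hproj_zero, he_zero, map_zero, sub_zero, add_zero, zero_pow two_ne_zero,
      Real.sqrt_sq (norm_nonneg φ)] at hφ
    have ha_neg := ha_bound u (-φ)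
    rw [map_neg, norm_neg] at ha_neg
    rw [hbproj]
    linarith
  exact babuskaConstant_mul_le hγa hγb (norm_nonneg u) (he_nonneg _) (hc_psd p) hcoer hinfsup

/-- Babuška inf-sup condition for the combined saddle-point form
`L(u,p;φ,q) = a(u,φ) + b(φ,p) + b(u,q) − c(p,q)` when `a` is coercive on all of `M`.
The supremum condition `sup L/‖(φ,q)‖ ≥ β‖(u,p)‖` is expressed in the equivalent
"least upper bound" form. `proj q` is the component of `q` orthogonal to the kernel
`K = {p | b(φ,p) = 0 ∀φ}`, and `‖q‖_N² = |proj q|_e² + c(q,q)`. -/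
theorem stmt0
    {M N : Type*}
    [NormedAddCommGroup M] [InnerProductSpace ℝ M] [CompleteSpace M]
    [NormedAddCommGroup N] [InnerProductSpace ℝ N] [CompleteSpace N]
    (a : M →ₗ[ℝ] M →ₗ[ℝ] ℝ) (b : M →ₗ[ℝ] N →ₗ[ℝ] ℝ) (c : N →ₗ[ℝ] N →ₗ[ℝ] ℝ)
    (e : N → ℝ)
    (Ca Cb γa γb : ℝ)
    (hCa : 0 < Ca) (hCb : 0 < Cb) (hγa : 0 < γa) (hγb : 0 < γb)
    -- |·|_e is a seminorm on N ...
    (he_nonneg : ∀ q, 0 ≤ e q)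
    (he_smul : ∀ (t : ℝ) (q : N), e (t • q) = |t| * e q)
    (he_add : ∀ p q : N, e (p + q) ≤ e p + e q)
    -- ... vanishing only on the kernel K
    (he_kernel : ∀ q : N, e q = 0 → ∀ φ : M, b φ q = 0)
    -- a is symmetric, bounded and coercive on M
    (ha_symm : ∀ u φ, a u φ = a φ u)
    (ha_bound : ∀ u φ, a u φ ≤ Ca * ‖u‖ * ‖φ‖)
    (ha_coercive : ∀ u, γa * ‖u‖ ^ 2 ≤ a u u)
    -- b is bounded and satisfies the inf-sup condition with respect to |·|_e
    (hb_bound : ∀ u p, b u p ≤ Cb * ‖u‖ * e p)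
    (hb_infsup : ∀ q : N, ∀ s : ℝ, (∀ u : M, b u q ≤ s * ‖u‖) → γb * e q ≤ s)
    -- c is symmetric positive semi-definite, positive on K \ {0}
    (hc_symm : ∀ p q, c p q = c q p)
    (hc_psd : ∀ q, 0 ≤ c q q)
    (hc_pos_on_K : ∀ q : N, (∀ φ : M, b φ q = 0) → q ≠ 0 → 0 < c q q)
    -- proj q is the component of q orthogonal to K
    (proj : N → N)
    (hproj_ker : ∀ (q : N) (φ : M), b φ (q - proj q) = 0)
    (hproj_orth : ∀ q k : N, (∀ φ : M, b φ k = 0) → ⟪proj q, k⟫ = 0) :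
    ∃ β > 0, ∀ (u : M) (p : N) (s : ℝ),
      (∀ (φ : M) (q : N), a u φ + b φ p + b u q - c p q ≤
          s * Real.sqrt (‖φ‖ ^ 2 + (e (proj q) ^ 2 + c q q))) →
      β * Real.sqrt (‖u‖ ^ 2 + (e (proj p) ^ 2 + c p p)) ≤ s :=
  stmt0_general a b c e Ca γa γb hγa hγb he_nonneg he_smul ha_bound ha_coercive hb_infsup hc_psd
    proj hproj_ker hproj_orth
end

section
/- Under the hypotheses of the previous setting (a symmetric, bounded, coercive on M with constants C_a, γ_a; b bounded by C_b and satisfying the inf-sup condition with constant γ_b with respect to the seminorm |·|_e; c symmetric positive semi-definite), for any (u,p) ∈ M×N, the test pair φ = u + θw with θ = γ_a γ_b/C_a², where w ∈ M satisfies b(w,p̄) ≥ γ_b|p̄|_e² and ‖w‖_M = |p̄|_e, and q = −p, yields L(u,p;φ,q) ≥ (γ_a/2)‖u‖_M² + (γ_a γ_b²/(2C_a²))|p̄|_e² + c(p,p). -/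
open scoped RealInnerProductSpace

/-!
Expanding `L(u,p;u+θw,-p)` by bilinearity, the `b(u,p)` terms cancel and `c(p,-p) = -c(p,p)`,
leaving `a(u,u) + θ (a(u,w) + b(w,p)) + c(p,p)`. Coercivity bounds `a(u,u)` below, boundedness of
`a` together with `‖w‖ = |p̄|_e` bounds `a(u,w)` below, and `b(w,p) = b(w,p̄)` is bounded below by
the inf-sup choice of `w`. What remains is a quadratic inequality in `‖u‖` and `|p̄|_e`, which
follows by completing the square: the deficit is `γ_a/(2C_a²) (C_a‖u‖ - γ_b|p̄|_e)²`.
-/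

theorem abs_le_of_forall_le_mul_norm {M : Type*} [SeminormedAddCommGroup M] [Module ℝ M]
    (a : M →ₗ[ℝ] M →ₗ[ℝ] ℝ) {C : ℝ} (ha : ∀ u φ, a u φ ≤ C * ‖u‖ * ‖φ‖) (u φ : M) :
    |a u φ| ≤ C * ‖u‖ * ‖φ‖ := by
  refine abs_le.mpr ⟨?_, ha u φ⟩
  have := ha u (-φ)
  rw [map_neg, norm_neg] at this
  linarith

theorem saddle_form_test_pair_eq {R M N : Type*} [CommRing R] [AddCommGroup M] [Module R M]
    [AddCommGroup N] [Module R N]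
    (a : M →ₗ[R] M →ₗ[R] R) (b : M →ₗ[R] N →ₗ[R] R) (c : N →ₗ[R] N →ₗ[R] R)
    (u w : M) (p : N) (θ : R) :
    a u (u + θ • w) + b (u + θ • w) p + b u (-p) - c p (-p) =
      a u u + θ * (a u w + b w p) + c p p := by
  simp only [map_add, map_smul, map_neg, LinearMap.add_apply, LinearMap.smul_apply, smul_eq_mul]
  ring

theorem half_coercive_le_of_sq_completion {Ca γa γb x y : ℝ} (hCa : Ca ≠ 0) (hγa : 0 ≤ γa) :
    γa / 2 * x ^ 2 + γa * γb ^ 2 / (2 * Ca ^ 2) * y ^ 2 ≤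
      γa * x ^ 2 + γa * γb / Ca ^ 2 * (γb * y ^ 2 - Ca * x * y) := by
  have hsq : 0 ≤ γa / (2 * Ca ^ 2) * (Ca * x - γb * y) ^ 2 := by positivity
  have hdeficit : γa * x ^ 2 + γa * γb / Ca ^ 2 * (γb * y ^ 2 - Ca * x * y)
      - (γa / 2 * x ^ 2 + γa * γb ^ 2 / (2 * Ca ^ 2) * y ^ 2)
      = γa / (2 * Ca ^ 2) * (Ca * x - γb * y) ^ 2 := by
    field_simp
    ring
  linarith

theorem stmt1_general
    {M N : Type*}
    [NormedAddCommGroup M] [InnerProductSpace ℝ M]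
    [NormedAddCommGroup N] [InnerProductSpace ℝ N]
    (a : M →ₗ[ℝ] M →ₗ[ℝ] ℝ) (b : M →ₗ[ℝ] N →ₗ[ℝ] ℝ) (c : N →ₗ[ℝ] N →ₗ[ℝ] ℝ)
    (e : N → ℝ)
    (Ca γa γb : ℝ)
    (hCa : 0 < Ca) (hγa : 0 < γa) (hγb : 0 < γb)
    -- a is symmetric, bounded and coercive on M
    (ha_bound : ∀ u φ, a u φ ≤ Ca * ‖u‖ * ‖φ‖)
    (ha_coercive : ∀ u, γa * ‖u‖ ^ 2 ≤ a u u)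
    -- data: (u,p), the projection p̄ of p onto K^⊥, and w from the inf-sup condition
    (u : M) (p pbar : N)
    (hpbar : ∀ φ : M, b φ (p - pbar) = 0)
    (w : M)
    (hw_infsup : γb * e pbar ^ 2 ≤ b w pbar)
    (hw_norm : ‖w‖ = e pbar) :
    γa / 2 * ‖u‖ ^ 2 + γa * γb ^ 2 / (2 * Ca ^ 2) * e pbar ^ 2 + c p p ≤
      a u (u + (γa * γb / Ca ^ 2) • w) + b (u + (γa * γb / Ca ^ 2) • w) p
        + b u (-p) - c p (-p) := by
  have hθ : 0 ≤ γa * γb / Ca ^ 2 := by positivity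
  have hcross : -(Ca * ‖u‖ * e pbar) ≤ a u w :=
    hw_norm ▸ neg_le_of_abs_le (abs_le_of_forall_le_mul_norm a ha_bound u w)
  have hinfsup : γb * e pbar ^ 2 ≤ b w p := by
    have hproj : b w p - b w pbar = 0 := by simpa only [map_sub] using hpbar w
    linarith
  rw [saddle_form_test_pair_eq]
  calc γa / 2 * ‖u‖ ^ 2 + γa * γb ^ 2 / (2 * Ca ^ 2) * e pbar ^ 2 + c p p
      ≤ γa * ‖u‖ ^ 2 + γa * γb / Ca ^ 2 * (γb * e pbar ^ 2 - Ca * ‖u‖ * e pbar) + c p p := by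
        gcongr ?_ + _
        exact half_coercive_le_of_sq_completion hCa.ne' hγa.le
    _ ≤ a u u + γa * γb / Ca ^ 2 * (a u w + b w p) + c p p := by
        gcongr
        · exact ha_coercive u
        · linarith

/-- The key lower bound in the proof of the Babuška inf-sup condition: with the test
functions `φ = u + θ w`, `θ = γ_a γ_b / C_a²`, and `q = -p`, where `w` realizes the
inf-sup condition for `b` at `p̄` (the component of `p` orthogonal to the kernel `K`),
one has `L(u,p;φ,q) ≥ (γ_a/2)‖u‖² + (γ_a γ_b²/(2C_a²))|p̄|_e² + c(p,p)`. -/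
theorem stmt1
    {M N : Type*}
    [NormedAddCommGroup M] [InnerProductSpace ℝ M] [CompleteSpace M]
    [NormedAddCommGroup N] [InnerProductSpace ℝ N] [CompleteSpace N]
    (a : M →ₗ[ℝ] M →ₗ[ℝ] ℝ) (b : M →ₗ[ℝ] N →ₗ[ℝ] ℝ) (c : N →ₗ[ℝ] N →ₗ[ℝ] ℝ)
    (e : N → ℝ)
    (Ca Cb γa γb : ℝ)
    (hCa : 0 < Ca) (hCb : 0 < Cb) (hγa : 0 < γa) (hγb : 0 < γb)
    (he_nonneg : ∀ q, 0 ≤ e q)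
    -- a is symmetric, bounded and coercive on M
    (ha_symm : ∀ u φ, a u φ = a φ u)
    (ha_bound : ∀ u φ, a u φ ≤ Ca * ‖u‖ * ‖φ‖)
    (ha_coercive : ∀ u, γa * ‖u‖ ^ 2 ≤ a u u)
    -- b is bounded by C_b with respect to |·|_e
    (hb_bound : ∀ u p, b u p ≤ Cb * ‖u‖ * e p)
    -- c is symmetric positive semi-definite
    (hc_symm : ∀ p q, c p q = c q p)
    (hc_psd : ∀ q, 0 ≤ c q q)
    -- data: (u,p), the projection p̄ of p onto K^⊥, and w from the inf-sup condition
    (u : M) (p pbar : N)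
    (hpbar : ∀ φ : M, b φ (p - pbar) = 0)
    (w : M)
    (hw_infsup : γb * e pbar ^ 2 ≤ b w pbar)
    (hw_norm : ‖w‖ = e pbar) :
    γa / 2 * ‖u‖ ^ 2 + γa * γb ^ 2 / (2 * Ca ^ 2) * e pbar ^ 2 + c p p ≤
      a u (u + (γa * γb / Ca ^ 2) • w) + b (u + (γa * γb / Ca ^ 2) • w) p
        + b u (-p) - c p (-p) :=
  stmt1_general a b c e Ca γa γb hCa hγa hγb ha_bound ha_coercive u p pbar hpbar w hw_infsup hw_norm
end

section
/- Let X be a Hilbert space, L: X → X' a bounded symmetric linear operator satisfying ⟨Lx,y⟩ ≤ C‖x‖_X‖y‖_X and the inf-sup condition inf_x sup_y ⟨Lx,y⟩/(‖x‖_X‖y‖_X) = β > 0. Let P: X' → X be the Riesz map defined by (Pf, y)_X = ⟨f, y⟩ for all f ∈ X', y ∈ X. Then the operator PL: X → X satisfies ‖PL‖ ≤ C and ‖(PL)^{-1}‖ ≤ 1/β, hence the condition number κ(PL) = ‖PL‖·‖(PL)^{-1}‖ ≤ C/β. -/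
/-!
Writing `P` for the inverse Riesz map, `P` is an isometry, so `‖P (L x)‖ = ‖L x‖`: the
continuity bound on `L` bounds this from above, and the inf-sup condition, applied with
`s = ‖L x‖`, bounds it from below by `β ‖x‖`. Since `⟪P (L x), y⟫ = L x y`, the symmetry of `L`
makes `P ∘ L` a symmetric operator on `X`; being bounded below, it is injective with closed
range, and the orthogonal complement of its range is its kernel, so it is also surjective.
-/

namespace ContinuousLinearMap

variable {𝕜 E : Type*} [RCLike 𝕜] [NormedAddCommGroup E] [InnerProductSpace 𝕜 E]

theorem antilipschitzWith_of_mul_norm_le {T : E →L[𝕜] E} {c : ℝ} (hc : 0 < c)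
    (h : ∀ x, c * ‖x‖ ≤ ‖T x‖) : AntilipschitzWith (Real.toNNReal c⁻¹) T :=
  T.antilipschitz_of_bound fun x => by
    rw [Real.coe_toNNReal _ (inv_nonneg.mpr hc.le), le_inv_mul_iff₀ hc]
    exact h x

theorem bijective_of_isSymmetric_of_mul_norm_le [CompleteSpace E] {T : E →L[𝕜] E}
    (hT : (T : E →ₗ[𝕜] E).IsSymmetric) {c : ℝ} (hc : 0 < c) (h : ∀ x, c * ‖x‖ ≤ ‖T x‖) :
    Function.Bijective T := by
  have hanti := antilipschitzWith_of_mul_norm_le hc h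
  have hker : LinearMap.ker (T : E →ₗ[𝕜] E) = ⊥ := LinearMap.ker_eq_bot.mpr hanti.injective
  have : CompleteSpace (LinearMap.range (T : E →ₗ[𝕜] E)) :=
    (hanti.isClosed_range T.uniformContinuous).completeSpace_coe
  have hrange : LinearMap.range (T : E →ₗ[𝕜] E) = ⊤ := by
    rw [← Submodule.orthogonal_eq_bot_iff, hT.orthogonal_range, hker]
  exact ⟨hanti.injective, LinearMap.range_eq_top.mp hrange⟩

end ContinuousLinearMap

theorem StrongDual.norm_le_of_forall_apply_le {E : Type*} [SeminormedAddCommGroup E]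
    [NormedSpace ℝ E] (f : StrongDual ℝ E) {M : ℝ} (hM : 0 ≤ M) (h : ∀ y, f y ≤ M * ‖y‖) :
    ‖f‖ ≤ M :=
  f.opNorm_le_bound hM fun y => by
    rw [Real.norm_eq_abs, abs_le]
    constructor
    · exact neg_le.mp (by simpa using h (-y))
    · exact h y

section RieszPreconditioner

variable {X : Type*} [NormedAddCommGroup X] [InnerProductSpace ℝ X] [CompleteSpace X]

noncomputable def rieszPreconditioned (L : X →L[ℝ] StrongDual ℝ X) : X →L[ℝ] X :=
  ((InnerProductSpace.toDual ℝ X).symm.toContinuousLinearEquiv :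
    StrongDual ℝ X ≃L[ℝ] X).toContinuousLinearMap.comp L

theorem rieszPreconditioned_apply (L : X →L[ℝ] StrongDual ℝ X) (x : X) :
    rieszPreconditioned L x = (InnerProductSpace.toDual ℝ X).symm (L x) :=
  rfl

theorem isSymmetric_rieszPreconditioned {L : X →L[ℝ] StrongDual ℝ X}
    (hsym : ∀ x y : X, L x y = L y x) :
    (rieszPreconditioned L : X →ₗ[ℝ] X).IsSymmetric := fun x y => by
  simp only [ContinuousLinearMap.coe_coe, rieszPreconditioned_apply]
  rw [← real_inner_comm x, InnerProductSpace.toDual_symm_apply,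
    InnerProductSpace.toDual_symm_apply, hsym]

end RieszPreconditioner

/-- The mapping-property principle: if `L : X → X'` is bounded and symmetric with
`⟨Lx,y⟩ ≤ C‖x‖‖y‖` and satisfies the inf-sup condition with constant `β > 0`, then the
Riesz-preconditioned operator `PL : X → X` (where `P` is the inverse of the Riesz map)
is bijective with `‖PL x‖ ≤ C‖x‖` and `‖PL x‖ ≥ β‖x‖`, hence `κ(PL) ≤ C/β`. -/
theorem stmt2
    {X : Type*} [NormedAddCommGroup X] [InnerProductSpace ℝ X] [CompleteSpace X]
    (L : X →L[ℝ] StrongDual ℝ X) (C β : ℝ) (hC : 0 < C) (hβ : 0 < β)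
    (hsym : ∀ x y : X, L x y = L y x)
    (hbound : ∀ x y : X, L x y ≤ C * ‖x‖ * ‖y‖)
    (hinfsup : ∀ x : X, ∀ s : ℝ, (∀ y : X, L x y ≤ s * ‖y‖) → β * ‖x‖ ≤ s) :
    Function.Bijective (fun x : X => (InnerProductSpace.toDual ℝ X).symm (L x)) ∧
    (∀ x : X, ‖(InnerProductSpace.toDual ℝ X).symm (L x)‖ ≤ C * ‖x‖) ∧
    (∀ x : X, β * ‖x‖ ≤ ‖(InnerProductSpace.toDual ℝ X).symm (L x)‖) := by
  simp only [LinearIsometryEquiv.norm_map]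
  have hlow (x : X) : β * ‖x‖ ≤ ‖L x‖ :=
    hinfsup x ‖L x‖ fun y => (Real.le_norm_self _).trans ((L x).le_opNorm y)
  refine ⟨?_, fun x => (L x).norm_le_of_forall_apply_le (by positivity) (hbound x), hlow⟩
  refine ContinuousLinearMap.bijective_of_isSymmetric_of_mul_norm_le
    (isSymmetric_rieszPreconditioned hsym) hβ fun x => ?_
  simpa [rieszPreconditioned_apply] using hlow x
end

section
/- Assume the H(div) inf-sup condition: for all q in the orthocomplement of K_v, sup_{v∈V} (∇·v,q)/‖v‖_{H(div)} ≥ c₀‖q‖₀ with c₀ independent of parameters. Then with ‖v‖_V² = (κv,v) and the augmented norm ‖(u,v)‖_W² = ‖u‖_U² + ‖v‖_V² + β‖P_Q∇·(u+v)‖₀², for β ≥ κ one has sup_{(u,v)∈W} b^{II}(u,v;q)/‖(u,v)‖_W ≳ β^{-1/2}‖q‖₀ for all q in the orthocomplement of K_v, with constant independent of κ and β. -/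
/-!
Testing the augmented inf-sup quotient only against pairs `(0, v)` suffices: since `κ ≤ β` and
`P_Q` is a contraction, `‖(0, v)‖_W ≤ √β ‖v‖_{H(div)}`, so a bound `s` for the augmented quotient
makes `s √β` a bound for the `H(div)` quotient, and the `H(div)` inf-sup condition gives
`c₀ ‖q‖ ≤ s √β`.
-/

open scoped RealInnerProductSpace

/-- The sign of `s` is not known; oddness of `f` forces `s ≥ 0` wherever `N > 0`. -/
theorem le_mul_of_le_mul_of_odd {α : Type*} [Neg α] {f N M : α → ℝ} {s : ℝ}
    (hf : ∀ x, f (-x) = -f x) (hN : ∀ x, N (-x) = N x) (hN0 : ∀ x, 0 ≤ N x)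
    (hNM : ∀ x, N x ≤ M x) (hM : ∀ x, N x = 0 → M x = 0)
    (h : ∀ x, f x ≤ s * N x) (x : α) : f x ≤ s * M x := by
  have hsN : 0 ≤ s * N x := by
    have h_neg := h (-x)
    rw [hf, hN] at h_neg
    linarith [h x]
  rcases (hN0 x).eq_or_lt with hN_zero | hN_pos
  · rw [hM x hN_zero.symm]
    simpa [← hN_zero] using h x
  · calc f x ≤ s * N x := h x
      _ ≤ s * M x := mul_le_mul_of_nonneg_left (hNM x) (nonneg_of_mul_nonneg_left hsN hN_pos)

theorem weighted_sq_add_le {κ β x y y' : ℝ} (hκ : 0 ≤ κ) (hκβ : κ ≤ β)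
    (hy' : 0 ≤ y') (hy : y' ≤ y) : κ * x ^ 2 + β * y' ^ 2 ≤ β * (x ^ 2 + y ^ 2) := by
  nlinarith [sq_nonneg x, mul_le_mul hy hy hy' (hy'.trans hy)]

/-- From the `H(div)` inf-sup condition for the flux (with parameter-independent
constant `c₀`), the inf-sup condition for `b^{II}(u,v;q) = (∇·u,q) + (∇·v,q)` holds in
the augmented-Lagrangian norm
`‖(u,v)‖_W² = a^I(u,u) + κ‖v‖² + β‖P_Q∇·(u+v)‖₀²` with lower bound `β^{-1/2}‖q‖₀`,
for all `q ∈ Q` orthogonal to `K_v`, whenever `β ≥ κ`, with a constant independent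
of `κ` and `β`. Here `‖v‖_{H(div)}² = ‖v‖₀² + ‖∇·v‖₀²`. -/
theorem stmt10
    {U E V L2 : Type*}
    [NormedAddCommGroup U] [InnerProductSpace ℝ U]
    [NormedAddCommGroup E] [InnerProductSpace ℝ E]
    [NormedAddCommGroup V] [InnerProductSpace ℝ V]
    [NormedAddCommGroup L2] [InnerProductSpace ℝ L2]
    (Q : Submodule ℝ L2)
    (PQ : L2 →ₗ[ℝ] L2)
    (hPQn : ∀ w : L2, ‖PQ w‖ ≤ ‖w‖)
    (eps : U →ₗ[ℝ] E) (divU : U →ₗ[ℝ] L2) (divV : V →ₗ[ℝ] L2)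
    (c₀ : ℝ) (hc₀ : 0 < c₀)
    -- H(div) inf-sup condition: for q ∈ Q orthogonal to K_v,
    -- sup_v (∇·v,q)/‖v‖_{H(div)} ≥ c₀ ‖q‖₀
    (hinfsup : ∀ q ∈ Q,
      (∀ k ∈ Q, (∀ v : V, ⟪divV v, k⟫ = 0) → ⟪q, k⟫ = 0) →
      ∀ s : ℝ,
        (∀ v : V, ⟪divV v, q⟫ ≤ s * Real.sqrt (‖v‖ ^ 2 + ‖divV v‖ ^ 2)) →
        c₀ * ‖q‖ ≤ s) :
    ∃ c₁ > 0, ∀ μ lam κ β : ℝ, 0 < μ → 0 < lam → 0 < κ → 0 < β →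
      κ ≤ β →
      ∀ q ∈ Q,
        (∀ k ∈ Q, (∀ v : V, ⟪divV v, k⟫ = 0) → ⟪q, k⟫ = 0) →
        ∀ s : ℝ,
          (∀ (u : U) (v : V), ⟪divU u + divV v, q⟫ ≤
            s * Real.sqrt ((2 * μ * ‖eps u‖ ^ 2 + lam * ‖divU u‖ ^ 2) + κ * ‖v‖ ^ 2 +
              β * ‖PQ (divU u + divV v)‖ ^ 2)) →
          c₁ * ((Real.sqrt β)⁻¹ * ‖q‖) ≤ s := by
  refine ⟨c₀, hc₀, fun μ lam κ β _ _ hκ hβ hκβ q hq horth s hs => ?_⟩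
  have hflux : ∀ v : V, ⟪divV v, q⟫ ≤ s * √(κ * ‖v‖ ^ 2 + β * ‖PQ (divV v)‖ ^ 2) := by
    intro v
    simpa using hs 0 v
  have hHdiv : ∀ v : V, ⟪divV v, q⟫ ≤ s * √β * √(‖v‖ ^ 2 + ‖divV v‖ ^ 2) := by
    intro v
    rw [mul_assoc, ← Real.sqrt_mul hβ.le]
    refine le_mul_of_le_mul_of_odd (f := fun v => ⟪divV v, q⟫)
      (N := fun v => √(κ * ‖v‖ ^ 2 + β * ‖PQ (divV v)‖ ^ 2))
      (M := fun v => √(β * (‖v‖ ^ 2 + ‖divV v‖ ^ 2)))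
      (fun v => by simp) (fun v => by simp) (fun v => Real.sqrt_nonneg _)
      (fun v => Real.sqrt_le_sqrt
        (weighted_sq_add_le hκ.le hκβ (norm_nonneg _) (hPQn _))) ?_ hflux v
    intro w hw
    have hw0 : w = 0 := by
      rw [Real.sqrt_eq_zero (by positivity)] at hw
      have : ‖w‖ ^ 2 = 0 := by nlinarith [sq_nonneg ‖w‖, sq_nonneg ‖PQ (divV w)‖]
      simpa using this
    simp [hw0]
  have key := hinfsup q hq horth _ hHdiv
  rw [mul_left_comm, inv_mul_le_iff₀ (Real.sqrt_pos.mpr hβ)]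
  linarith
end

section
/- Define norms ‖(u,v)‖_W² = ‖u‖_U² + ‖v‖_V² + β‖P_Q∇·v‖₀² and ‖q‖_Q² = β^{-1}‖q‖₀² with β = min{max{μ,λ}, κ}. Then b^{II}(u,v;q) = (∇·u,q) + (∇·v,q) is uniformly bounded: b^{II}(u,v;q) ≲ ‖(u,v)‖_W ‖q‖_Q with constant independent of μ, λ, κ, β, using ‖∇·u‖₀ ≲ (2μ‖ε(u)‖₀² + λ‖∇·u‖₀²)^{1/2}β^{-1/2}·β^{1/2} ≲ ‖u‖_U and ‖P_Q∇·v‖₀ ≤ β^{-1/2}·β^{1/2}‖P_Q∇·v‖₀. -/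
open scoped RealInnerProductSpace

/-! Both terms are bounded by Cauchy–Schwarz after splitting `‖x‖ ‖q‖ = (β^{1/2} ‖x‖) (β^{-1/2} ‖q‖)`.
For `x = ∇·u` one uses `β ≤ max{μ, λ} ≤ μ + λ` and `‖∇·u‖² ≤ Cn ‖ε(u)‖²`, so that `β ‖∇·u‖²` is
controlled by `a^I(u,u) = 2μ‖ε(u)‖² + λ‖∇·u‖²`; for `x = ∇·v` one first replaces `∇·v` by
`P_Q ∇·v`, which does not change the pairing with `q ∈ Q`. -/

theorem real_inner_le_sqrt_mul_sqrt_of_mul_norm_sq_le {F : Type*} [NormedAddCommGroup F]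
    [InnerProductSpace ℝ F] {β K W : ℝ} (hβ : 0 < β) (hK : 0 ≤ K) {x : F}
    (hx : β * ‖x‖ ^ 2 ≤ K * W) (q : F) :
    ⟪x, q⟫ ≤ Real.sqrt K * Real.sqrt W * Real.sqrt (β⁻¹ * ‖q‖ ^ 2) := by
  have hsplit : (‖x‖ * ‖q‖) ^ 2 = (β * ‖x‖ ^ 2) * (β⁻¹ * ‖q‖ ^ 2) := by
    field_simp
  calc ⟪x, q⟫ ≤ ‖x‖ * ‖q‖ := real_inner_le_norm x q
    _ = Real.sqrt ((β * ‖x‖ ^ 2) * (β⁻¹ * ‖q‖ ^ 2)) := by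
        rw [← hsplit, Real.sqrt_sq (by positivity)]
    _ ≤ Real.sqrt (K * W * (β⁻¹ * ‖q‖ ^ 2)) := by gcongr
    _ = Real.sqrt K * Real.sqrt W * Real.sqrt (β⁻¹ * ‖q‖ ^ 2) := by
        rw [Real.sqrt_mul' _ (by positivity), Real.sqrt_mul hK]

theorem mul_sq_le_max_mul_add {β μ lam Cn d e : ℝ} (hβ : β ≤ max μ lam) (hμ : 0 ≤ μ)
    (hlam : 0 ≤ lam) (hde : d ^ 2 ≤ Cn * e ^ 2) :
    β * d ^ 2 ≤ max (Cn / 2) 1 * (2 * μ * e ^ 2 + lam * d ^ 2) := by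
  have hβ' : β * d ^ 2 ≤ μ * d ^ 2 + lam * d ^ 2 := by
    nlinarith [sq_nonneg d, max_le_add_of_nonneg hμ hlam]
  nlinarith [mul_le_mul_of_nonneg_left hde hμ, le_max_left (Cn / 2) 1, le_max_right (Cn / 2) 1,
    mul_nonneg hμ (sq_nonneg e), mul_nonneg hlam (sq_nonneg d)]

theorem inner_eq_inner_apply_of_mem {L2 : Type*} [NormedAddCommGroup L2]
    [InnerProductSpace ℝ L2] {Q : Submodule ℝ L2} {PQ : L2 →ₗ[ℝ] L2}
    (hPQ : ∀ w : L2, ∀ q ∈ Q, ⟪w - PQ w, q⟫ = 0) (w : L2) {q : L2} (hq : q ∈ Q) :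
    ⟪w, q⟫ = ⟪PQ w, q⟫ := by
  rw [← sub_eq_zero, ← inner_sub_left, hPQ w q hq]

theorem stmt11_general
    {U E V L2 : Type*}
    [NormedAddCommGroup U] [InnerProductSpace ℝ U]
    [NormedAddCommGroup E] [InnerProductSpace ℝ E]
    [NormedAddCommGroup V] [InnerProductSpace ℝ V]
    [NormedAddCommGroup L2] [InnerProductSpace ℝ L2]
    (Q : Submodule ℝ L2)
    (PQ : L2 →ₗ[ℝ] L2)
    -- PQ is the orthogonal projection onto Q
    (hPQ : ∀ w : L2, ∀ q ∈ Q, ⟪w - PQ w, q⟫ = 0)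
    (eps : U →ₗ[ℝ] E) (divU : U →ₗ[ℝ] L2) (divV : V →ₗ[ℝ] L2)
    (Cn : ℝ)
    -- ‖∇·u‖₀² ≤ n ‖ε(u)‖₀²
    (hde : ∀ u : U, ‖divU u‖ ^ 2 ≤ Cn * ‖eps u‖ ^ 2) :
    ∃ C > 0, ∀ μ lam κ : ℝ, 0 < μ → 0 < lam → 0 < κ →
      ∀ (u : U) (v : V), ∀ q ∈ Q,
        ⟪divU u, q⟫ + ⟪divV v, q⟫ ≤
          C * Real.sqrt ((2 * μ * ‖eps u‖ ^ 2 + lam * ‖divU u‖ ^ 2) + κ * ‖v‖ ^ 2 +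
              min (max μ lam) κ * ‖PQ (divV v)‖ ^ 2) *
            Real.sqrt ((min (max μ lam) κ)⁻¹ * ‖q‖ ^ 2) := by
  set K := max (Cn / 2) 1
  have hK : 0 ≤ K := zero_le_one.trans (le_max_right _ _)
  refine ⟨Real.sqrt K + 1, by positivity, fun μ lam κ hμ hlam hκ u v q hq => ?_⟩
  set β := min (max μ lam) κ
  have hβ : 0 < β := lt_min (hμ.trans_le (le_max_left _ _)) hκ
  set W := (2 * μ * ‖eps u‖ ^ 2 + lam * ‖divU u‖ ^ 2) + κ * ‖v‖ ^ 2 + β * ‖PQ (divV v)‖ ^ 2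
  have hU : β * ‖divU u‖ ^ 2 ≤ K * W := by
    refine (mul_sq_le_max_mul_add (min_le_left _ _) hμ.le hlam.le (hde u)).trans ?_
    gcongr
    simp only [W]
    nlinarith [mul_nonneg hκ.le (sq_nonneg ‖v‖), mul_nonneg hβ.le (sq_nonneg ‖PQ (divV v)‖)]
  have hV : β * ‖PQ (divV v)‖ ^ 2 ≤ 1 * W := by
    simp only [W]
    nlinarith [mul_nonneg hμ.le (sq_nonneg ‖eps u‖), mul_nonneg hlam.le (sq_nonneg ‖divU u‖),
      mul_nonneg hκ.le (sq_nonneg ‖v‖)]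
  have h₁ := real_inner_le_sqrt_mul_sqrt_of_mul_norm_sq_le hβ hK hU q
  have h₂ := real_inner_le_sqrt_mul_sqrt_of_mul_norm_sq_le hβ zero_le_one hV q
  rw [Real.sqrt_one, ← inner_eq_inner_apply_of_mem hPQ _ hq] at h₂
  linarith

/-- Uniform boundedness of `b^{II}(u,v;q) = (∇·u,q) + (∇·v,q)` in the block-diagonal
norms `‖(u,v)‖_W² = a^I(u,u) + κ‖v‖² + β‖P_Q∇·v‖₀²` and `‖q‖_Q² = β⁻¹‖q‖₀²` with
`β = min{max{μ,λ}, κ}`: the constant is independent of `μ, λ, κ, β` (it depends only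
on the dimension constant `Cn` in `‖∇·u‖₀² ≤ Cn ‖ε(u)‖₀²`). -/
theorem stmt11
    {U E V L2 : Type*}
    [NormedAddCommGroup U] [InnerProductSpace ℝ U]
    [NormedAddCommGroup E] [InnerProductSpace ℝ E]
    [NormedAddCommGroup V] [InnerProductSpace ℝ V]
    [NormedAddCommGroup L2] [InnerProductSpace ℝ L2]
    (Q : Submodule ℝ L2)
    (PQ : L2 →ₗ[ℝ] L2)
    -- PQ is the orthogonal projection onto Q
    (hPQmem : ∀ w : L2, PQ w ∈ Q)
    (hPQ : ∀ w : L2, ∀ q ∈ Q, ⟪w - PQ w, q⟫ = 0)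
    (eps : U →ₗ[ℝ] E) (divU : U →ₗ[ℝ] L2) (divV : V →ₗ[ℝ] L2)
    (Cn : ℝ) (hCn : 0 < Cn)
    -- ‖∇·u‖₀² ≤ n ‖ε(u)‖₀²
    (hde : ∀ u : U, ‖divU u‖ ^ 2 ≤ Cn * ‖eps u‖ ^ 2) :
    ∃ C > 0, ∀ μ lam κ : ℝ, 0 < μ → 0 < lam → 0 < κ →
      ∀ (u : U) (v : V), ∀ q ∈ Q,
        ⟪divU u, q⟫ + ⟪divV v, q⟫ ≤
          C * Real.sqrt ((2 * μ * ‖eps u‖ ^ 2 + lam * ‖divU u‖ ^ 2) + κ * ‖v‖ ^ 2 +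
              min (max μ lam) κ * ‖PQ (divV v)‖ ^ 2) *
            Real.sqrt ((min (max μ lam) κ)⁻¹ * ‖q‖ ^ 2) :=
  stmt11_general Q PQ hPQ eps divU divV Cn hde
end

section
/- With the norm ‖(u,v)‖_W² = ‖u‖_U² + ‖v‖_V² + β‖P_Q∇·v‖₀² where β = min{max{μ,λ}, κ}, the form a^{II}(u,v;u,v) = a^I(u,u) + (κv,v) is coercive on the kernel Z^{II} = {(u,v) : (∇·(u+v),q) = 0 ∀q ∈ Q}: there is a constant c > 0 independent of μ, λ, κ such that a^{II}(u,v;u,v) ≥ c‖(u,v)‖_W² for all (u,v) ∈ Z^{II}. -/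
open scoped RealInnerProductSpace

/-! On the kernel, `P_Q ∇·v = -P_Q ∇·u`, so `‖P_Q ∇·v‖ ≤ ‖∇·u‖`. Since `β ≤ max{μ, λ}` and
`‖∇·u‖² ≤ C ‖ε(u)‖²`, the extra term `β ‖P_Q ∇·v‖²` is bounded by `max{1, C/2} a^I(u,u)`,
which gives the constant `c = 1 / (1 + max{1, C/2})`. -/

theorem apply_eq_zero_of_forall_inner_eq_zero {L : Type*} [NormedAddCommGroup L]
    [InnerProductSpace ℝ L] {Q : Submodule ℝ L} {P : L → L} (hmem : ∀ w, P w ∈ Q)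
    (horth : ∀ w, ∀ q ∈ Q, ⟪w - P w, q⟫ = 0) {w : L} (hw : ∀ q ∈ Q, ⟪w, q⟫ = 0) :
    P w = 0 := by
  have h := horth w (P w) (hmem w)
  rw [inner_sub_left, hw _ (hmem w), zero_sub, neg_eq_zero] at h
  exact inner_self_eq_zero.mp h

theorem max_mul_le_max_one_mul {μ lam C d e : ℝ} (hμ : 0 ≤ μ) (hlam : 0 ≤ lam) (hd : 0 ≤ d)
    (he : 0 ≤ e) (hde : d ≤ C * e) :
    max μ lam * d ≤ max 1 (C / 2) * (2 * μ * e + lam * d) := by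
  have hK : 1 ≤ max 1 (C / 2) := le_max_left _ _
  rcases le_total μ lam with h | h
  · calc max μ lam * d = lam * d := by rw [max_eq_right h]
      _ ≤ 2 * μ * e + lam * d := by linarith [mul_nonneg (mul_nonneg zero_le_two hμ) he]
      _ ≤ max 1 (C / 2) * (2 * μ * e + lam * d) := le_mul_of_one_le_left (by positivity) hK
  · calc max μ lam * d = μ * d := by rw [max_eq_left h]
      _ ≤ C / 2 * (2 * μ * e) := by nlinarith [mul_le_mul_of_nonneg_left hde hμ]
      _ ≤ max 1 (C / 2) * (2 * μ * e) := by gcongr; exact le_max_right _ _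
      _ ≤ max 1 (C / 2) * (2 * μ * e + lam * d) := by
        gcongr; exact le_add_of_nonneg_right (by positivity)

theorem one_div_one_add_mul_le {A B X K : ℝ} (hB : 0 ≤ B) (hK : 0 ≤ K)
    (hX : X ≤ K * A) : 1 / (1 + K) * (A + B + X) ≤ A + B := by
  rw [div_mul_eq_mul_div, one_mul, div_le_iff₀ (by positivity)]
  nlinarith [mul_nonneg hK hB]

theorem stmt12_general
    {U E V L2 : Type*}
    [NormedAddCommGroup U] [InnerProductSpace ℝ U]
    [NormedAddCommGroup E] [InnerProductSpace ℝ E]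
    [NormedAddCommGroup V] [InnerProductSpace ℝ V]
    [NormedAddCommGroup L2] [InnerProductSpace ℝ L2]
    (Q : Submodule ℝ L2)
    (PQ : L2 →ₗ[ℝ] L2)
    -- PQ is the orthogonal projection onto Q
    (hPQmem : ∀ w : L2, PQ w ∈ Q)
    (hPQ : ∀ w : L2, ∀ q ∈ Q, ⟪w - PQ w, q⟫ = 0)
    (hPQn : ∀ w : L2, ‖PQ w‖ ≤ ‖w‖)
    (eps : U →ₗ[ℝ] E) (divU : U →ₗ[ℝ] L2) (divV : V →ₗ[ℝ] L2)
    (Cn : ℝ)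
    -- ‖∇·u‖₀² ≤ n ‖ε(u)‖₀²
    (hde : ∀ u : U, ‖divU u‖ ^ 2 ≤ Cn * ‖eps u‖ ^ 2) :
    ∃ c > 0, ∀ μ lam κ : ℝ, 0 < μ → 0 < lam → 0 < κ →
      ∀ (u : U) (v : V),
        (∀ q ∈ Q, ⟪divU u + divV v, q⟫ = 0) →
        c * ((2 * μ * ‖eps u‖ ^ 2 + lam * ‖divU u‖ ^ 2) + κ * ‖v‖ ^ 2 +
            min (max μ lam) κ * ‖PQ (divV v)‖ ^ 2) ≤
          (2 * μ * ‖eps u‖ ^ 2 + lam * ‖divU u‖ ^ 2) + κ * ‖v‖ ^ 2 := by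
  refine ⟨1 / (1 + max 1 (Cn / 2)), by positivity, ?_⟩
  intro μ lam κ hμ hlam _ u v hker
  have hsum : PQ (divV v) = -PQ (divU u) := by
    have h := apply_eq_zero_of_forall_inner_eq_zero hPQmem hPQ hker
    rw [map_add] at h
    exact eq_neg_of_add_eq_zero_right h
  have hnorm : ‖PQ (divV v)‖ ^ 2 ≤ ‖divU u‖ ^ 2 := by
    gcongr
    rw [hsum, norm_neg]
    exact hPQn _
  have hbeta : min (max μ lam) κ * ‖PQ (divV v)‖ ^ 2 ≤
      max 1 (Cn / 2) * (2 * μ * ‖eps u‖ ^ 2 + lam * ‖divU u‖ ^ 2) :=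
    calc min (max μ lam) κ * ‖PQ (divV v)‖ ^ 2 ≤ max μ lam * ‖divU u‖ ^ 2 := by
          gcongr; exact min_le_left _ _
      _ ≤ _ := max_mul_le_max_one_mul hμ.le hlam.le (by positivity) (by positivity) (hde u)
  exact one_div_one_add_mul_le (by positivity)
    (zero_le_one.trans (le_max_left _ _)) hbeta

/-- Coercivity of `a^{II}(u,v;u,v) = a^I(u,u) + κ‖v‖²` on the kernel
`Z^{II} = {(u,v) : (∇·(u+v),q) = 0 ∀ q ∈ Q}` with respect to the norm
`‖(u,v)‖_W² = a^I(u,u) + κ‖v‖² + β‖P_Q∇·v‖₀²` where `β = min{max{μ,λ}, κ}`: there is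
`c > 0` independent of `μ, λ, κ` with `a^{II}(u,v;u,v) ≥ c‖(u,v)‖_W²` on `Z^{II}`. -/
theorem stmt12
    {U E V L2 : Type*}
    [NormedAddCommGroup U] [InnerProductSpace ℝ U]
    [NormedAddCommGroup E] [InnerProductSpace ℝ E]
    [NormedAddCommGroup V] [InnerProductSpace ℝ V]
    [NormedAddCommGroup L2] [InnerProductSpace ℝ L2]
    (Q : Submodule ℝ L2)
    (PQ : L2 →ₗ[ℝ] L2)
    -- PQ is the orthogonal projection onto Q
    (hPQmem : ∀ w : L2, PQ w ∈ Q)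
    (hPQ : ∀ w : L2, ∀ q ∈ Q, ⟪w - PQ w, q⟫ = 0)
    (hPQn : ∀ w : L2, ‖PQ w‖ ≤ ‖w‖)
    (eps : U →ₗ[ℝ] E) (divU : U →ₗ[ℝ] L2) (divV : V →ₗ[ℝ] L2)
    (Cn : ℝ) (hCn : 0 < Cn)
    -- ‖∇·u‖₀² ≤ n ‖ε(u)‖₀²
    (hde : ∀ u : U, ‖divU u‖ ^ 2 ≤ Cn * ‖eps u‖ ^ 2) :
    ∃ c > 0, ∀ μ lam κ : ℝ, 0 < μ → 0 < lam → 0 < κ →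
      ∀ (u : U) (v : V),
        (∀ q ∈ Q, ⟪divU u + divV v, q⟫ = 0) →
        c * ((2 * μ * ‖eps u‖ ^ 2 + lam * ‖divU u‖ ^ 2) + κ * ‖v‖ ^ 2 +
            min (max μ lam) κ * ‖PQ (divV v)‖ ^ 2) ≤
          (2 * μ * ‖eps u‖ ^ 2 + lam * ‖divU u‖ ^ 2) + κ * ‖v‖ ^ 2 :=
  stmt12_general Q PQ hPQmem hPQ hPQn eps divU divV Cn hde
end

section
/- Under the norms ‖(u,v)‖_W² = ‖u‖_U² + ‖v‖_V² and ‖q‖_Q² = β^{-1}‖q‖₀² + ‖div*_V q‖²_{V'} with β = max{μ,λ}, assuming both inf-sup conditions sup_{u∈U}(∇·u,q)/‖u‖₁ ≳ ‖q‖₀ and sup_{v∈V}(∇·v,q)/‖v‖_{H(div)} ≳ ‖q‖₀, the combined inf-sup holds: sup_{(u,v)∈W} b^{II}(u,v;q)/‖(u,v)‖_W ≳ ‖q‖_Q for all q ∈ Q, with implicit constant independent of μ, λ, κ. -/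
open scoped RealInnerProductSpace

/-!
Testing `b^{II}` against `(u, 0)` bounds the displacement part: the energy of `u` is at most
`β (2 + Cd²) ‖u‖²`, so the `H¹` inf-sup condition gives `β⁻¹ ‖q‖² ≲ s²`. Testing against `(0, v)`
shows that `s` is an admissible bound in the definition of the dual norm, hence `‖div*_V q‖_{V'} ≤ s`.
Adding the squares of the two estimates gives the claim.
-/

theorem IsLeast.nonneg_of_odd {V : Type*} [Neg V] {f N : V → ℝ} {d : ℝ}
    (hf : ∀ v, f (-v) = -f v) (hN : ∀ v, N (-v) = N v)
    (h : IsLeast {s | ∀ v, f v ≤ s * N v} d) : 0 ≤ d := by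
  by_contra! hd
  -- testing `v` and `-v` forces `N v ≤ 0`, so `d - 1` is an admissible bound as well
  have hd₁ : d ≤ d - 1 := h.2 fun v => by
    have h₁ := h.1 v
    have h₂ := h.1 (-v)
    rw [hf, hN] at h₂
    nlinarith
  linarith

theorem two_mul_sq_add_mul_sq_le {μ lam C a b n : ℝ} (hμ : 0 ≤ μ) (hlam : 0 ≤ lam)
    (ha₀ : 0 ≤ a) (ha : a ≤ n) (hb₀ : 0 ≤ b) (hb : b ≤ C * n) :
    2 * μ * a ^ 2 + lam * b ^ 2 ≤ max μ lam * (2 + C ^ 2) * n ^ 2 := by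
  have ha2 : a ^ 2 ≤ n ^ 2 := pow_le_pow_left₀ ha₀ ha 2
  have hb2 : b ^ 2 ≤ C ^ 2 * n ^ 2 := by simpa [mul_pow] using pow_le_pow_left₀ hb₀ hb 2
  nlinarith [mul_le_mul_of_nonneg_left ha2 hμ, mul_le_mul_of_nonneg_left hb2 hlam,
    mul_le_mul_of_nonneg_right (le_max_left μ lam) (sq_nonneg n),
    mul_le_mul_of_nonneg_right (le_max_right μ lam) (mul_nonneg (sq_nonneg C) (sq_nonneg n))]

theorem inv_mul_sq_le_of_mul_le_mul_sqrt {β K c s x : ℝ} (hβ : 0 < β) (hK : 0 ≤ K) (hc : 0 < c)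
    (hx : 0 ≤ x) (h : c * x ≤ s * √(β * K)) : β⁻¹ * x ^ 2 ≤ K / c ^ 2 * s ^ 2 := by
  have hsq : c ^ 2 * x ^ 2 ≤ s ^ 2 * (β * K) := by
    simpa [mul_pow, Real.sq_sqrt (mul_nonneg hβ.le hK)] using
      pow_le_pow_left₀ (by positivity) h 2
  rw [div_mul_eq_mul_div, le_div_iff₀ (by positivity), inv_mul_eq_div, div_mul_eq_mul_div,
    div_le_iff₀ hβ]
  linarith

theorem inv_sqrt_one_add_mul_sqrt_add_le {A B K s : ℝ} (hK : 0 ≤ K) (hs : 0 ≤ s)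
    (hA : A ≤ K * s ^ 2) (hB : B ≤ s ^ 2) : (√(1 + K))⁻¹ * √(A + B) ≤ s := by
  have hpos : 0 < √(1 + K) := by positivity
  rw [inv_mul_le_iff₀ hpos]
  calc √(A + B) ≤ √((1 + K) * s ^ 2) := Real.sqrt_le_sqrt (by linarith)
    _ = √(1 + K) * s := by rw [Real.sqrt_mul (by positivity), Real.sqrt_sq hs]

theorem stmt14_general
    {U E V Q : Type*}
    [NormedAddCommGroup U] [InnerProductSpace ℝ U]
    [NormedAddCommGroup E] [InnerProductSpace ℝ E]
    [NormedAddCommGroup V] [InnerProductSpace ℝ V]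
    [NormedAddCommGroup Q] [InnerProductSpace ℝ Q]
    (eps : U →ₗ[ℝ] E) (divU : U →ₗ[ℝ] Q) (divV : V →ₗ[ℝ] Q)
    (Cd c₀ : ℝ) (hc₀ : 0 < c₀)
    (heps : ∀ u : U, ‖eps u‖ ≤ ‖u‖)
    (hdivU : ∀ u : U, ‖divU u‖ ≤ Cd * ‖u‖)
    -- H¹ inf-sup condition for the displacement
    (hinfsupU : ∀ q : Q, ∀ s : ℝ, (∀ u : U, ⟪divU u, q⟫ ≤ s * ‖u‖) → c₀ * ‖q‖ ≤ s) :
    ∃ c₁ > 0, ∀ μ lam κ : ℝ, 0 < μ → 0 < lam → 0 < κ →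
      ∀ dstar : Q → ℝ,
        -- dstar q = ‖div*_V q‖_{V'} : upper bound...
        (∀ (q : Q) (v : V), ⟪divV v, q⟫ ≤ dstar q * Real.sqrt (κ * ‖v‖ ^ 2)) →
        -- ...and least such
        (∀ (q : Q) (s : ℝ),
          (∀ v : V, ⟪divV v, q⟫ ≤ s * Real.sqrt (κ * ‖v‖ ^ 2)) → dstar q ≤ s) →
        ∀ (q : Q) (s : ℝ),
          (∀ (u : U) (v : V), ⟪divU u, q⟫ + ⟪divV v, q⟫ ≤
            s * Real.sqrt ((2 * μ * ‖eps u‖ ^ 2 + lam * ‖divU u‖ ^ 2) + κ * ‖v‖ ^ 2)) →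
          c₁ * Real.sqrt ((max μ lam)⁻¹ * ‖q‖ ^ 2 + dstar q ^ 2) ≤ s := by
  refine ⟨(√(1 + (2 + Cd ^ 2) / c₀ ^ 2))⁻¹, by positivity, ?_⟩
  intro μ lam κ hμ hlam _ dstar hub hleast q s hs
  have hd₀ : 0 ≤ dstar q :=
    IsLeast.nonneg_of_odd (f := fun v => ⟪divV v, q⟫) (fun v => by simp) (fun v => by simp)
      ⟨hub q, hleast q⟩
  have hds : dstar q ≤ s := hleast q s fun v => by simpa using hs 0 v
  have hU : c₀ * ‖q‖ ≤ s * √(max μ lam * (2 + Cd ^ 2)) := hinfsupU q _ fun u => calc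
    ⟪divU u, q⟫ = ⟪divU u, q⟫ + ⟪divV 0, q⟫ := by simp
    _ ≤ s * √((2 * μ * ‖eps u‖ ^ 2 + lam * ‖divU u‖ ^ 2) + κ * ‖(0 : V)‖ ^ 2) := hs u 0
    _ ≤ s * √(max μ lam * (2 + Cd ^ 2) * ‖u‖ ^ 2) := by
      gcongr
      · linarith
      · simpa using two_mul_sq_add_mul_sq_le hμ.le hlam.le (norm_nonneg _) (heps u)
          (norm_nonneg _) (hdivU u)
    _ = s * √(max μ lam * (2 + Cd ^ 2)) * ‖u‖ := by
      rw [Real.sqrt_mul (by positivity), Real.sqrt_sq (norm_nonneg u), mul_assoc]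
  exact inv_sqrt_one_add_mul_sqrt_add_le (by positivity) (hd₀.trans hds)
    (inv_mul_sq_le_of_mul_le_mul_sqrt (lt_max_of_lt_left hμ) (by positivity) hc₀
      (norm_nonneg q) hU)
    (pow_le_pow_left₀ hd₀ hds 2)

/-- Combined inf-sup condition in the dual-norm setting: with
`‖(u,v)‖_W² = a^I(u,u) + κ‖v‖²` and `‖q‖_Q² = β⁻¹‖q‖₀² + ‖div*_V q‖²_{V'}`,
`β = max{μ,λ}`, assuming the `H¹` inf-sup condition for `∇·u` and the `H(div)`
inf-sup condition for `∇·v` (with parameter-independent constants), one has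
`sup_{(u,v)} b^{II}(u,v;q)/‖(u,v)‖_W ≳ ‖q‖_Q` with constant independent of
`μ, λ, κ`.  Here `dstar q = ‖div*_V q‖_{V'}` is the dual norm with respect to
`‖v‖_V = (κ‖v‖²)^{1/2}`, characterized as the least upper bound. -/
theorem stmt14
    {U E V Q : Type*}
    [NormedAddCommGroup U] [InnerProductSpace ℝ U]
    [NormedAddCommGroup E] [InnerProductSpace ℝ E]
    [NormedAddCommGroup V] [InnerProductSpace ℝ V]
    [NormedAddCommGroup Q] [InnerProductSpace ℝ Q]
    (eps : U →ₗ[ℝ] E) (divU : U →ₗ[ℝ] Q) (divV : V →ₗ[ℝ] Q)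
    (Cd c₀ c₀' : ℝ) (hCd : 0 < Cd) (hc₀ : 0 < c₀) (hc₀' : 0 < c₀')
    (heps : ∀ u : U, ‖eps u‖ ≤ ‖u‖)
    (hdivU : ∀ u : U, ‖divU u‖ ≤ Cd * ‖u‖)
    -- H¹ inf-sup condition for the displacement
    (hinfsupU : ∀ q : Q, ∀ s : ℝ, (∀ u : U, ⟪divU u, q⟫ ≤ s * ‖u‖) → c₀ * ‖q‖ ≤ s)
    -- H(div) inf-sup condition for the flux
    (hinfsupV : ∀ q : Q, ∀ s : ℝ,
      (∀ v : V, ⟪divV v, q⟫ ≤ s * Real.sqrt (‖v‖ ^ 2 + ‖divV v‖ ^ 2)) →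
      c₀' * ‖q‖ ≤ s) :
    ∃ c₁ > 0, ∀ μ lam κ : ℝ, 0 < μ → 0 < lam → 0 < κ →
      ∀ dstar : Q → ℝ,
        -- dstar q = ‖div*_V q‖_{V'} : upper bound...
        (∀ (q : Q) (v : V), ⟪divV v, q⟫ ≤ dstar q * Real.sqrt (κ * ‖v‖ ^ 2)) →
        -- ...and least such
        (∀ (q : Q) (s : ℝ),
          (∀ v : V, ⟪divV v, q⟫ ≤ s * Real.sqrt (κ * ‖v‖ ^ 2)) → dstar q ≤ s) →
        ∀ (q : Q) (s : ℝ),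
          (∀ (u : U) (v : V), ⟪divU u, q⟫ + ⟪divV v, q⟫ ≤
            s * Real.sqrt ((2 * μ * ‖eps u‖ ^ 2 + lam * ‖divU u‖ ^ 2) + κ * ‖v‖ ^ 2)) →
          c₁ * Real.sqrt ((max μ lam)⁻¹ * ‖q‖ ^ 2 + dstar q ^ 2) ≤ s :=
  stmt14_general eps divU divV Cd c₀ hc₀ heps hdivU hinfsupU
end

section
/- Let M, N be Hilbert spaces, a and c symmetric positive semi-definite bounded bilinear forms on M and N respectively, b bounded on M×N, with a coercive on the kernel Z = {u : b(u,q)=0 ∀q} (a(u,u) ≥ γ_a‖u‖_M² for u ∈ Z), c coercive on the kernel K = {p : b(φ,p)=0 ∀φ} (c(q,q) ≥ γ_c‖q‖_N² for q ∈ K), c bounded (c(p,q) ≤ C_c‖p‖_N‖q‖_N), and b satisfying the inf-sup condition sup_u b(u,q)/‖u‖_M ≥ γ_b‖q̄‖_N for q̄ the projection of q onto K^⊥. Then the saddle point problem a(u,φ) + b(φ,p) = ⟨f,φ⟩, b(u,q) − c(p,q) = ⟨g,q⟩ has a unique solution satisfying ‖u‖_M + ‖p‖_N ≤ C(‖f‖_{M'}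 + ‖g‖_{N'}) with C depending only on the constants C_a, C_b, C_c, γ_a, γ_b, γ_c. -/
/-!
Write `𝔅((u, p), (φ, q)) = a(u, φ) + b(φ, p) + b(u, q) - c(p, q)` on the Hilbert sum `M ⊕ N`.
Everything rests on an a priori bound `‖u‖ + ‖p‖ ≤ C (F + G)` for any `(u, p)` whose two
residuals have dual norms at most `F` and `G`. The inf-sup condition bounds the component of `p`
in `K^⊥`; the closed range of `b^*` on `K^⊥` gives the dual inf-sup condition, which bounds the
component of `u` in `Z^⊥`; coercivity on `Z` and on `K` bounds the remaining components. These four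
bounds also involve the energies `√a(u,u)` and `√c(p,p)`, which the energy identity
`a(u,u) + c(p,p) = f(u) - g(p)` absorbs. The a priori bound gives uniqueness and stability;
since `𝔅` is symmetric and bounded below, the range of its Riesz operator is closed with trivial
orthogonal complement, which gives existence.
-/

open scoped RealInnerProductSpace

namespace LinearMap

theorem norm_apply_le_of_apply_le {E F : Type*} [SeminormedAddCommGroup E] [Module ℝ E]
    [SeminormedAddCommGroup F] [Module ℝ F] (B : E →ₗ[ℝ] F →ₗ[ℝ] ℝ) {C : ℝ}
    (hB : ∀ x y, B x y ≤ C * ‖x‖ * ‖y‖) (x : E) (y : F) : ‖B x y‖ ≤ C * ‖x‖ * ‖y‖ := by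
  have hneg := hB (-x) y
  rw [map_neg, neg_apply, norm_neg] at hneg
  exact abs_le.mpr ⟨by linarith, hB x y⟩

theorem sqrt_apply_self_le {E : Type*} [SeminormedAddCommGroup E] [Module ℝ E]
    (B : E →ₗ[ℝ] E →ₗ[ℝ] ℝ) {C : ℝ} {x : E} (hB : B x x ≤ C * ‖x‖ * ‖x‖) :
    √(B x x) ≤ √C * ‖x‖ := by
  rw [← Real.sqrt_sq (norm_nonneg x), ← Real.sqrt_mul' C (sq_nonneg _)]
  exact Real.sqrt_le_sqrt (by linarith)

namespace IsPosSemidef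

section Module

variable {E : Type*} [AddCommGroup E] [Module ℝ E] {B : E →ₗ[ℝ] E →ₗ[ℝ] ℝ}

theorem abs_apply_le (hB : B.IsPosSemidef) (x y : E) : |B x y| ≤ √(B x x) * √(B y y) := by
  rw [← Real.sqrt_mul (hB.isNonneg.nonneg x), ← Real.sqrt_sq_eq_abs]
  exact Real.sqrt_le_sqrt (BilinForm.apply_sq_le_of_symm B hB.isNonneg.nonneg hB.isSymm x y)

theorem sqrt_apply_sub_le (hB : B.IsPosSemidef) (x y : E) :
    √(B (x - y) (x - y)) ≤ √(B x x) + √(B y y) := by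
  have hexpand : B (x - y) (x - y) = B x x - 2 * B x y + B y y := by
    have hsymm : B x y = B y x := hB.isSymm.eq x y
    simp only [map_sub, sub_apply, ← hsymm]
    ring
  rw [Real.sqrt_le_iff, hexpand, add_sq, Real.sq_sqrt (hB.isNonneg.nonneg x),
    Real.sq_sqrt (hB.isNonneg.nonneg y)]
  exact ⟨by positivity, by linarith [neg_abs_le (B x y), hB.abs_apply_le x y]⟩

end Module

variable {E : Type*} [SeminormedAddCommGroup E] [Module ℝ E] {B : E →ₗ[ℝ] E →ₗ[ℝ] ℝ} {C : ℝ}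

theorem abs_apply_le_of_le (hB : B.IsPosSemidef) (hC : ∀ x y, B x y ≤ C * ‖x‖ * ‖y‖)
    (x y : E) : |B x y| ≤ √(B x x) * (√C * ‖y‖) :=
  (hB.abs_apply_le x y).trans <|
    mul_le_mul_of_nonneg_left (B.sqrt_apply_self_le (hC y y)) (Real.sqrt_nonneg _)

theorem sqrt_mul_norm_sub_le (hB : B.IsPosSemidef) {γ : ℝ} {x y : E}
    (hγ : γ * ‖x - y‖ ^ 2 ≤ B (x - y) (x - y)) (hC : B y y ≤ C * ‖y‖ * ‖y‖) :
    √γ * ‖x - y‖ ≤ √(B x x) + √C * ‖y‖ := calc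
  √γ * ‖x - y‖ = √(γ * ‖x - y‖ ^ 2) := by
    rw [Real.sqrt_mul' γ (sq_nonneg _), Real.sqrt_sq (norm_nonneg _)]
  _ ≤ √(B (x - y) (x - y)) := Real.sqrt_le_sqrt hγ
  _ ≤ √(B x x) + √(B y y) := hB.sqrt_apply_sub_le x y
  _ ≤ √(B x x) + √C * ‖y‖ := by grw [B.sqrt_apply_self_le hC]

end IsPosSemidef

end LinearMap

theorem norm_le_of_forall_inner_le {E : Type*} [NormedAddCommGroup E] [InnerProductSpace ℝ E]
    {x : E} {s : ℝ} (hs : 0 ≤ s) (h : ∀ y, ⟪x, y⟫ ≤ s * ‖y‖) : ‖x‖ ≤ s := by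
  have hx := h x
  rw [real_inner_self_eq_norm_sq, sq] at hx
  rcases (norm_nonneg x).eq_or_lt with hx0 | hx0
  · rw [← hx0]; exact hs
  · exact le_of_mul_le_mul_right hx hx0

theorem le_mul_of_sq_le_mul_add {t D β γ : ℝ} (hD : 0 ≤ D) (hβ : 0 ≤ β)
    (hγ : 0 ≤ γ) (h : t ^ 2 ≤ β * D * t + γ * D ^ 2) : t ≤ (β + γ + 1) * D := by
  rcases le_or_gt t D with htD | htD
  · nlinarith
  · have hγD : γ * D ^ 2 ≤ γ * D * t := by
      rw [sq, ← mul_assoc]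
      exact mul_le_mul_of_nonneg_left htD.le (mul_nonneg hγ hD)
    have htt : t * t ≤ ((β + γ) * D) * t := by nlinarith
    have := le_of_mul_le_mul_right htt (hD.trans_lt htD)
    nlinarith

theorem le_div_add_of_le_add_of_mul_le {x y z r k s t γ : ℝ} (hr : 0 < r) (hk : 0 ≤ k)
    (hγ : 0 < γ) (hx : r * x ≤ s + k * y) (hy : γ * y ≤ t) (hz : z ≤ x + y) :
    z ≤ s / r + (k / r + 1) / γ * t := by
  have hx' : x ≤ s / r + k / r * y := calc
    x ≤ (s + k * y) / r := (le_div_iff₀' hr).mpr hx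
    _ = s / r + k / r * y := by ring
  have hy' : (k / r + 1) * y ≤ (k / r + 1) / γ * t := by
    rw [div_mul_eq_mul_div, le_div_iff₀ hγ, mul_assoc, mul_comm y]
    gcongr
  linarith

theorem add_le_of_sq_add_sq_le {X Y α σ F G E₁ E₂ : ℝ} (hX : 0 ≤ X) (hY : 0 ≤ Y) (hF : 0 ≤ F)
    (hG : 0 ≤ G) (hE₁ : 0 ≤ E₁) (hE₂ : 0 ≤ E₂)
    (henergy : α ^ 2 + σ ^ 2 ≤ F * X + G * Y)
    (hXY : X + Y ≤ E₁ * (α + σ) + E₂ * (F + G)) :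
    X + Y ≤ (E₁ * (2 * E₁ + 2 * E₂ + 1) + E₂) * (F + G) := by
  have hsq : (α + σ) ^ 2 ≤ 2 * E₁ * (F + G) * (α + σ) + 2 * E₂ * (F + G) ^ 2 := calc
    (α + σ) ^ 2 ≤ 2 * (α ^ 2 + σ ^ 2) := by nlinarith [sq_nonneg (α - σ)]
    _ ≤ 2 * ((F + G) * (X + Y)) := by nlinarith
    _ ≤ 2 * ((F + G) * (E₁ * (α + σ) + E₂ * (F + G))) := by gcongr
    _ = _ := by ring
  have ht := le_mul_of_sq_le_mul_add (by positivity) (by positivity) (by positivity) hsq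
  calc X + Y ≤ E₁ * (α + σ) + E₂ * (F + G) := hXY
    _ ≤ E₁ * ((2 * E₁ + 2 * E₂ + 1) * (F + G)) + E₂ * (F + G) := by gcongr
    _ = _ := by ring

theorem WithLp.prod_norm_le_add_of_L2 {α β : Type*} [SeminormedAddCommGroup α]
    [SeminormedAddCommGroup β] (x : WithLp 2 (α × β)) : ‖x‖ ≤ ‖x.fst‖ + ‖x.snd‖ := by
  rw [WithLp.prod_norm_eq_of_L2, Real.sqrt_le_iff]
  exact ⟨by positivity, by nlinarith [norm_nonneg x.fst, norm_nonneg x.snd]⟩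

namespace ContinuousLinearMap

theorem apply_le_opNorm_mul {E : Type*} [SeminormedAddCommGroup E] [NormedSpace ℝ E]
    (ℓ : StrongDual ℝ E) (x : E) : ℓ x ≤ ‖ℓ‖ * ‖x‖ :=
  (Real.le_norm_self _).trans (ℓ.le_opNorm x)

section RCLike

variable {𝕜 E F : Type*} [RCLike 𝕜] [NormedAddCommGroup E] [InnerProductSpace 𝕜 E]
  [CompleteSpace E] [NormedAddCommGroup F] [InnerProductSpace 𝕜 F]

theorem exists_mem_orthogonal_ker_apply_eq (T : E →L[𝕜] F) (x : E) :
    ∃ x' ∈ T.kerᗮ, T x' = T x := by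
  have : CompleteSpace T.ker := T.isClosed_ker.completeSpace_coe
  have hker : T (T.ker.starProjection x) = 0 := T.ker.starProjection_apply_mem x
  exact ⟨x - T.ker.starProjection x, Submodule.sub_starProjection_mem_orthogonal x,
    by rw [map_sub, hker, sub_zero]⟩

theorem isClosed_range_of_orthogonal_ker_bound (T : E →L[𝕜] F) {γ : ℝ} (hγ : 0 < γ)
    (hT : ∀ x ∈ T.kerᗮ, γ * ‖x‖ ≤ ‖T x‖) : IsClosed (T.range : Set F) := by
  have hrange : (T.range : Set F) = Set.range (T ∘L T.kerᗮ.subtypeL) := by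
    ext y
    constructor
    · rintro ⟨x, rfl⟩
      obtain ⟨x', hx', hx'T⟩ := T.exists_mem_orthogonal_ker_apply_eq x
      exact ⟨⟨x', hx'⟩, hx'T⟩
    · rintro ⟨x, rfl⟩
      exact ⟨x, rfl⟩
  have hanti : AntilipschitzWith ⟨γ⁻¹, inv_nonneg.mpr hγ.le⟩ (T ∘L T.kerᗮ.subtypeL) :=
    antilipschitz_of_bound _ fun x => (le_inv_mul_iff₀ hγ).mpr (hT x x.2)
  rw [hrange]
  exact hanti.isClosed_range (T ∘L T.kerᗮ.subtypeL).uniformContinuous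

theorem exists_mem_ker_adjoint_norm_sub_le [CompleteSpace F] (T : E →L[𝕜] F) {γ : ℝ}
    (hγ : 0 < γ) (hT : ∀ x ∈ T.kerᗮ, γ * ‖x‖ ≤ ‖T x‖) (y : F) :
    ∃ y₀ ∈ (adjoint T).ker, γ * ‖y - y₀‖ ≤ ‖adjoint T y‖ := by
  have : CompleteSpace T.range :=
    (T.isClosed_range_of_orthogonal_ker_bound hγ hT).completeSpace_coe
  have hy₀ : y - T.range.starProjection y ∈ (adjoint T).ker := by
    rw [← T.orthogonal_range]
    exact Submodule.sub_starProjection_mem_orthogonal y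
  refine ⟨_, hy₀, ?_⟩
  rw [sub_sub_cancel]
  set z := T.range.starProjection y
  have hadj : adjoint T z = adjoint T y := by
    rw [LinearMap.mem_ker, map_sub, sub_eq_zero] at hy₀
    exact hy₀.symm
  obtain ⟨x, hx⟩ := T.range.starProjection_apply_mem y
  obtain ⟨x', hx', hx'T⟩ := T.exists_mem_orthogonal_ker_apply_eq x
  have hz : z = T x' := by rw [hx'T]; exact hx.symm
  have hsq : ‖z‖ ^ 2 ≤ ‖z‖ / γ * ‖adjoint T y‖ := calc
    ‖z‖ ^ 2 = RCLike.re (inner 𝕜 (T x') z) := by rw [← hz, ← @norm_sq_eq_re_inner 𝕜]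
    _ = RCLike.re (inner 𝕜 x' (adjoint T y)) := by rw [← adjoint_inner_right, hadj]
    _ ≤ ‖x'‖ * ‖adjoint T y‖ := re_inner_le_norm _ _
    _ ≤ ‖z‖ / γ * ‖adjoint T y‖ := by
      gcongr
      rw [le_div_iff₀' hγ, hz]
      exact hT x' hx'
  rcases (norm_nonneg z).eq_or_lt with hz0 | hz0
  · rw [← hz0, mul_zero]; exact norm_nonneg _
  · rw [div_mul_eq_mul_div, le_div_iff₀ hγ, sq] at hsq
    nlinarith

end RCLike

open InnerProductSpace in
theorem surjective_of_symm_of_norm_le {E : Type*} [NormedAddCommGroup E]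
    [InnerProductSpace ℝ E] [CompleteSpace E] (B : E →L[ℝ] E →L[ℝ] ℝ)
    (hB : ∀ x y, B x y = B y x) {K : ℝ} (hK : ∀ x, ‖x‖ ≤ K * ‖B x‖) :
    Function.Surjective B := by
  set T := continuousLinearMapOfBilin B
  have hT : ∀ x y, ⟪T x, y⟫ = B x y := continuousLinearMapOfBilin_apply B
  have hTK : ∀ x, ‖x‖ ≤ K.toNNReal * ‖T x‖ := fun x => by
    have : ‖T x‖ = ‖B x‖ := (toDual ℝ E).symm.norm_map (B x)
    rw [this]
    exact (hK x).trans (by gcongr; exact Real.le_coe_toNNReal K)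
  have : CompleteSpace T.range :=
    ((antilipschitz_of_bound T hTK).isClosed_range T.uniformContinuous).completeSpace_coe
  have hrange : T.range = ⊤ := by
    refine Submodule.orthogonal_eq_bot_iff.mp (Submodule.eq_bot_iff _ |>.mpr fun w hw => ?_)
    have hw' : ∀ x, ⟪T x, w⟫ = 0 := fun x =>
      Submodule.inner_right_of_mem_orthogonal (LinearMap.mem_range_self (T : E →ₗ[ℝ] E) x) hw
    have hTw : T w = 0 := by
      rw [← inner_self_eq_zero (𝕜 := ℝ), hT, hB, ← hT, hw']
    simpa [hTw] using hTK w
  intro ℓ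
  obtain ⟨x, hx⟩ : (toDual ℝ E).symm ℓ ∈ T.range := hrange ▸ Submodule.mem_top
  refine ⟨x, ContinuousLinearMap.ext fun y => ?_⟩
  rw [← hT, show T x = _ from hx, toDual_symm_apply]

end ContinuousLinearMap

section SaddlePoint

variable {M N : Type*} [NormedAddCommGroup M] [InnerProductSpace ℝ M]
  [NormedAddCommGroup N] [InnerProductSpace ℝ N]

noncomputable def saddleForm (a : M →L[ℝ] M →L[ℝ] ℝ) (b : M →L[ℝ] N →L[ℝ] ℝ)
    (c : N →L[ℝ] N →L[ℝ] ℝ) : WithLp 2 (M × N) →L[ℝ] WithLp 2 (M × N) →L[ℝ] ℝ :=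
  a.bilinearComp (WithLp.fstL 2 ℝ M N) (WithLp.fstL 2 ℝ M N) +
    b.flip.bilinearComp (WithLp.sndL 2 ℝ M N) (WithLp.fstL 2 ℝ M N) +
    b.bilinearComp (WithLp.fstL 2 ℝ M N) (WithLp.sndL 2 ℝ M N) -
    c.bilinearComp (WithLp.sndL 2 ℝ M N) (WithLp.sndL 2 ℝ M N)

@[simp]
theorem saddleForm_apply (a : M →L[ℝ] M →L[ℝ] ℝ) (b : M →L[ℝ] N →L[ℝ] ℝ)
    (c : N →L[ℝ] N →L[ℝ] ℝ) (x y : WithLp 2 (M × N)) :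
    saddleForm a b c x y = a x.fst y.fst + b y.fst x.snd + b x.fst y.snd - c x.snd y.snd :=
  rfl

theorem exists_saddle_solution [CompleteSpace M] [CompleteSpace N] (a : M →L[ℝ] M →L[ℝ] ℝ)
    (b : M →L[ℝ] N →L[ℝ] ℝ) (c : N →L[ℝ] N →L[ℝ] ℝ) (ha : ∀ u φ, a u φ = a φ u)
    (hc : ∀ p q, c p q = c q p) {C : ℝ}
    (hC : ∀ (u : M) (p : N) (F G : ℝ), 0 ≤ F → 0 ≤ G → (∀ φ, a u φ + b φ p ≤ F * ‖φ‖) →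
      (∀ q, b u q - c p q ≤ G * ‖q‖) → ‖u‖ + ‖p‖ ≤ C * (F + G))
    (f : StrongDual ℝ M) (g : StrongDual ℝ N) :
    ∃ u p, (∀ φ, a u φ + b φ p = f φ) ∧ (∀ q, b u q - c p q = g q) := by
  set B := saddleForm a b c
  have hB : ∀ x y, B x y = B y x := fun x y => by
    simp only [B, saddleForm_apply, ha x.fst, hc x.snd]
    ring
  have hK : ∀ x, ‖x‖ ≤ (2 * C) * ‖B x‖ := fun x => by
    have hle := (B x).apply_le_opNorm_mul
    have := hC x.fst x.snd ‖B x‖ ‖B x‖ (norm_nonneg (B x)) (norm_nonneg (B x))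
      (fun φ => by simpa [B, WithLp.norm_toLp_fst] using hle (WithLp.toLp 2 (φ, 0)))
      (fun q => by simpa [B, WithLp.norm_toLp_snd] using hle (WithLp.toLp 2 (0, q)))
    linarith [WithLp.prod_norm_le_add_of_L2 x]
  obtain ⟨x, hx⟩ := B.surjective_of_symm_of_norm_le hB hK
    (f ∘L WithLp.fstL 2 ℝ M N + g ∘L WithLp.sndL 2 ℝ M N)
  refine ⟨x.fst, x.snd, fun φ => ?_, fun q => ?_⟩
  · simpa [B] using congrArg (fun ℓ => ℓ (WithLp.toLp 2 (φ, 0))) hx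
  · simpa [B] using congrArg (fun ℓ => ℓ (WithLp.toLp 2 (0, q))) hx

open InnerProductSpace ContinuousLinearMap in
theorem exists_ker_dual_infsup [CompleteSpace M] [CompleteSpace N] (b : M →L[ℝ] N →L[ℝ] ℝ)
    {γb : ℝ} (hγb : 0 < γb) (proj : N → N) (hproj_ker : ∀ (q : N) (φ : M), b φ (q - proj q) = 0)
    (hproj_orth : ∀ q k : N, (∀ φ : M, b φ k = 0) → ⟪proj q, k⟫ = 0)
    (hb_infsup : ∀ q : N, ∀ s : ℝ, (∀ u : M, b u q ≤ s * ‖u‖) → γb * ‖proj q‖ ≤ s) (u : M) :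
    ∃ u₀ : M, (∀ q, b u₀ q = 0) ∧
      ∀ s, 0 ≤ s → (∀ q, b u q ≤ s * ‖q‖) → γb * ‖u - u₀‖ ≤ s := by
  set T : N →L[ℝ] M := (toDual ℝ M).symm.toContinuousLinearEquiv.toContinuousLinearMap ∘L b.flip
  have hT : ∀ q φ, ⟪T q, φ⟫ = b φ q := fun q φ => toDual_symm_apply
  have hker : ∀ k, (∀ φ, b φ k = 0) → k ∈ T.ker := fun k hk =>
    inner_self_eq_zero.mp ((hT k _).trans (hk _))
  have hproj_fix : ∀ r ∈ T.kerᗮ, proj r = r := fun r hr => by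
    have h₁ : ⟪proj r, r - proj r⟫ = 0 := hproj_orth r _ (hproj_ker r)
    have h₂ : ⟪r, r - proj r⟫ = 0 :=
      Submodule.inner_left_of_mem_orthogonal (hker _ (hproj_ker r)) hr
    have h₃ : ⟪r - proj r, r - proj r⟫ = 0 := by rw [inner_sub_left, h₁, h₂, sub_zero]
    exact (sub_eq_zero.mp (inner_self_eq_zero.mp h₃)).symm
  have hT_bound : ∀ r ∈ T.kerᗮ, γb * ‖r‖ ≤ ‖T r‖ := fun r hr => by
    have h := hb_infsup r ‖T r‖ fun φ => hT r φ ▸ real_inner_le_norm _ _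
    rwa [hproj_fix r hr] at h
  obtain ⟨u₀, hu₀, hle⟩ := T.exists_mem_ker_adjoint_norm_sub_le hγb hT_bound u
  refine ⟨u₀, fun q => ?_, fun s hs hu => hle.trans (norm_le_of_forall_inner_le hs fun q => ?_)⟩
  · rw [← hT, ← adjoint_inner_right, show adjoint T u₀ = 0 from hu₀, inner_zero_right]
  · rw [adjoint_inner_left, real_inner_comm, hT]
    exact hu q

end SaddlePoint

/-- `E₁` and `E₂` are the coefficients of `‖u‖ + ‖p‖ ≤ E₁ (√a(u,u) + √c(p,p)) + E₂ (F + G)`,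
which the inf-sup conditions and the kernel coercivities give before the energy estimate
absorbs the first term. -/
noncomputable def saddleConst (Ca Cc γa γb γc : ℝ) : ℝ :=
  let A₁ := (√Ca / √γa + 1) / γb
  let A₂ := (√Cc / √γc + 1) / γb
  let E₁ := 1 / √γa + 1 / √γc + A₁ * √Cc + A₂ * √Ca
  let E₂ := A₁ + A₂
  E₁ * (2 * E₁ + 2 * E₂ + 1) + E₂

theorem saddleConst_pos {Ca Cc γa γb γc : ℝ} (hγa : 0 < γa) (hγb : 0 < γb) (hγc : 0 < γc) :
    0 < saddleConst Ca Cc γa γb γc := by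
  simp only [saddleConst]
  positivity

theorem saddle_norm_add_norm_le {M N : Type*} [SeminormedAddCommGroup M] [Module ℝ M]
    [SeminormedAddCommGroup N] [Module ℝ N]
    (a : M →ₗ[ℝ] M →ₗ[ℝ] ℝ) (b : M →ₗ[ℝ] N →ₗ[ℝ] ℝ) (c : N →ₗ[ℝ] N →ₗ[ℝ] ℝ)
    {Ca Cc γa γb γc : ℝ} (hγa : 0 < γa) (hγb : 0 < γb) (hγc : 0 < γc)
    (ha : a.IsPosSemidef) (ha_bound : ∀ u φ, a u φ ≤ Ca * ‖u‖ * ‖φ‖)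
    (hc : c.IsPosSemidef) (hc_bound : ∀ p q, c p q ≤ Cc * ‖p‖ * ‖q‖)
    (ha_coercive : ∀ u : M, (∀ q : N, b u q = 0) → γa * ‖u‖ ^ 2 ≤ a u u)
    (hc_coercive : ∀ q : N, (∀ φ : M, b φ q = 0) → γc * ‖q‖ ^ 2 ≤ c q q)
    (proj : N → N) (hproj_ker : ∀ (q : N) (φ : M), b φ (q - proj q) = 0)
    (hb_infsup : ∀ q : N, ∀ s : ℝ, (∀ u : M, b u q ≤ s * ‖u‖) → γb * ‖proj q‖ ≤ s)
    (hb_infsup_dual : ∀ u : M, ∃ u₀ : M, (∀ q, b u₀ q = 0) ∧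
      ∀ s, 0 ≤ s → (∀ q, b u q ≤ s * ‖q‖) → γb * ‖u - u₀‖ ≤ s)
    (u : M) (p : N) (F G : ℝ) (hF : 0 ≤ F) (hG : 0 ≤ G)
    (hf : ∀ φ, a u φ + b φ p ≤ F * ‖φ‖) (hg : ∀ q, b u q - c p q ≤ G * ‖q‖) :
    ‖u‖ + ‖p‖ ≤ saddleConst Ca Cc γa γb γc * (F + G) := by
  obtain ⟨u₀, hu₀_ker, hu_dual⟩ := hb_infsup_dual u
  set α := √(a u u)
  set σ := √(c p p)
  have henergy : α ^ 2 + σ ^ 2 ≤ F * ‖u‖ + G * ‖p‖ := by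
    have hg' := hg (-p)
    simp only [map_neg, norm_neg] at hg'
    rw [Real.sq_sqrt (ha.isNonneg.nonneg u), Real.sq_sqrt (hc.isNonneg.nonneg p)]
    linarith [hf u]
  have hp_infsup : γb * ‖proj p‖ ≤ F + √Ca * α := hb_infsup p _ fun φ => by
    linarith [hf φ, neg_abs_le (a u φ), ha.abs_apply_le_of_le ha_bound u φ]
  have hu_infsup : γb * ‖u - u₀‖ ≤ G + √Cc * σ := hu_dual _ (by positivity) fun q => by
    linarith [hg q, le_abs_self (c p q), hc.abs_apply_le_of_le hc_bound p q]
  have hu_coercive : √γa * ‖u₀‖ ≤ α + √Ca * ‖u - u₀‖ := by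
    have h := ha.sqrt_mul_norm_sub_le (x := u) (y := u - u₀)
      (by simpa only [sub_sub_cancel] using ha_coercive u₀ hu₀_ker) (ha_bound _ _)
    rwa [sub_sub_cancel] at h
  have hp_coercive : √γc * ‖p - proj p‖ ≤ σ + √Cc * ‖proj p‖ :=
    hc.sqrt_mul_norm_sub_le (hc_coercive _ (hproj_ker p)) (hc_bound _ _)
  have hu := le_div_add_of_le_add_of_mul_le (Real.sqrt_pos.mpr hγa) (Real.sqrt_nonneg Ca) hγb
    hu_coercive hu_infsup (norm_le_norm_add_norm_sub' u u₀)
  have hp := le_div_add_of_le_add_of_mul_le (Real.sqrt_pos.mpr hγc) (Real.sqrt_nonneg Cc) hγb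
    hp_coercive hp_infsup ((norm_le_norm_add_norm_sub' p (proj p)).trans_eq (add_comm _ _))
  set A₁ := (√Ca / √γa + 1) / γb
  set A₂ := (√Cc / √γc + 1) / γb
  have hA₁ : 0 ≤ A₁ := by positivity
  have hA₂ : 0 ≤ A₂ := by positivity
  refine add_le_of_sq_add_sq_le (E₁ := 1 / √γa + 1 / √γc + A₁ * √Cc + A₂ * √Ca) (E₂ := A₁ + A₂)
    (norm_nonneg u) (norm_nonneg p) hF hG (by positivity) (by positivity) henergy ?_
  have hα : 0 ≤ α := Real.sqrt_nonneg _
  have hσ : 0 ≤ σ := Real.sqrt_nonneg _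
  linear_combination hu + hp + mul_nonneg hA₁ hF + mul_nonneg hA₂ hG +
    mul_nonneg (mul_nonneg hA₁ (Real.sqrt_nonneg Cc)) hα +
    mul_nonneg (mul_nonneg hA₂ (Real.sqrt_nonneg Ca)) hσ +
    div_nonneg hσ (Real.sqrt_nonneg γa) + div_nonneg hα (Real.sqrt_nonneg γc)

theorem stmt15_general
    {M N : Type*}
    [NormedAddCommGroup M] [InnerProductSpace ℝ M] [CompleteSpace M]
    [NormedAddCommGroup N] [InnerProductSpace ℝ N] [CompleteSpace N]
    (a : M →ₗ[ℝ] M →ₗ[ℝ] ℝ) (b : M →ₗ[ℝ] N →ₗ[ℝ] ℝ) (c : N →ₗ[ℝ] N →ₗ[ℝ] ℝ)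
    (Ca Cb Cc γa γb γc : ℝ)
    (hγa : 0 < γa) (hγb : 0 < γb) (hγc : 0 < γc)
    -- a symmetric positive semi-definite and bounded
    (ha_symm : ∀ u φ, a u φ = a φ u)
    (ha_psd : ∀ u, 0 ≤ a u u)
    (ha_bound : ∀ u φ, a u φ ≤ Ca * ‖u‖ * ‖φ‖)
    -- b bounded
    (hb_bound : ∀ u q, b u q ≤ Cb * ‖u‖ * ‖q‖)
    -- c symmetric positive semi-definite and bounded
    (hc_symm : ∀ p q, c p q = c q p)
    (hc_psd : ∀ q, 0 ≤ c q q)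
    (hc_bound : ∀ p q, c p q ≤ Cc * ‖p‖ * ‖q‖)
    -- a coercive on the kernel Z of b
    (ha_coercive : ∀ u : M, (∀ q : N, b u q = 0) → γa * ‖u‖ ^ 2 ≤ a u u)
    -- c coercive on the kernel K of the adjoint of b
    (hc_coercive : ∀ q : N, (∀ φ : M, b φ q = 0) → γc * ‖q‖ ^ 2 ≤ c q q)
    -- proj q is the orthogonal projection of q onto K^⊥
    (proj : N → N)
    (hproj_ker : ∀ (q : N) (φ : M), b φ (q - proj q) = 0)
    (hproj_orth : ∀ q k : N, (∀ φ : M, b φ k = 0) → ⟪proj q, k⟫ = 0)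
    -- inf-sup condition for b
    (hb_infsup : ∀ q : N, ∀ s : ℝ, (∀ u : M, b u q ≤ s * ‖u‖) → γb * ‖proj q‖ ≤ s) :
    ∃ C > 0, ∀ (f : StrongDual ℝ M) (g : StrongDual ℝ N),
      -- existence
      (∃ (u : M) (p : N), (∀ φ, a u φ + b φ p = f φ) ∧ (∀ q, b u q - c p q = g q)) ∧
      -- uniqueness
      (∀ (u : M) (p : N) (u' : M) (p' : N),
        ((∀ φ, a u φ + b φ p = f φ) ∧ (∀ q, b u q - c p q = g q)) →
        ((∀ φ, a u' φ + b φ p' = f φ) ∧ (∀ q, b u' q - c p' q = g q)) →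
        u = u' ∧ p = p') ∧
      -- stability
      (∀ (u : M) (p : N),
        ((∀ φ, a u φ + b φ p = f φ) ∧ (∀ q, b u q - c p q = g q)) →
        ‖u‖ + ‖p‖ ≤ C * (‖f‖ + ‖g‖)) := by
  have ha : a.IsPosSemidef := ⟨⟨ha_symm⟩, ⟨ha_psd⟩⟩
  have hc : c.IsPosSemidef := ⟨⟨hc_symm⟩, ⟨hc_psd⟩⟩
  have hb_infsup_dual := exists_ker_dual_infsup
    (b.mkContinuous₂ Cb (b.norm_apply_le_of_apply_le hb_bound)) hγb proj hproj_ker hproj_orth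
    hb_infsup
  have hapriori := saddle_norm_add_norm_le a b c hγa hγb hγc ha ha_bound hc hc_bound ha_coercive
    hc_coercive proj hproj_ker hb_infsup hb_infsup_dual
  refine ⟨saddleConst Ca Cc γa γb γc, saddleConst_pos hγa hγb hγc, fun f g => ⟨?_, ?_, ?_⟩⟩
  · exact exists_saddle_solution (a.mkContinuous₂ Ca (a.norm_apply_le_of_apply_le ha_bound))
      (b.mkContinuous₂ Cb (b.norm_apply_le_of_apply_le hb_bound))
      (c.mkContinuous₂ Cc (c.norm_apply_le_of_apply_le hc_bound)) ha_symm hc_symm hapriori f g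
  · rintro u p u' p' ⟨hf, hg⟩ ⟨hf', hg'⟩
    have h := hapriori (u - u') (p - p') 0 0 le_rfl le_rfl
      (fun φ => by simp only [map_sub, LinearMap.sub_apply]; linarith [hf φ, hf' φ])
      (fun q => by simp only [map_sub, LinearMap.sub_apply]; linarith [hg q, hg' q])
    rw [add_zero, mul_zero] at h
    exact ⟨sub_eq_zero.mp (norm_le_zero_iff.mp (by linarith [norm_nonneg (p - p')])),
      sub_eq_zero.mp (norm_le_zero_iff.mp (by linarith [norm_nonneg (u - u')]))⟩
  · rintro u p ⟨hf, hg⟩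
    exact hapriori u p _ _ (norm_nonneg f) (norm_nonneg g)
      (fun φ => hf φ ▸ f.apply_le_opNorm_mul φ) (fun q => hg q ▸ g.apply_le_opNorm_mul q)

/-- Brezzi-type well-posedness theorem for perturbed saddle point problems: with `a`
coercive on the kernel `Z` of `b`, `c` coercive on the kernel `K` of the adjoint of
`b`, `a, b, c` bounded, `a, c` symmetric positive semi-definite, and `b` satisfying
the inf-sup condition with respect to the projection onto `K^⊥`, the saddle point
problem `a(u,φ) + b(φ,p) = ⟨f,φ⟩`, `b(u,q) − c(p,q) = ⟨g,q⟩` has a unique solution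
satisfying `‖u‖ + ‖p‖ ≤ C(‖f‖_{M'} + ‖g‖_{N'})` with `C` depending only on the
constants `C_a, C_b, C_c, γ_a, γ_b, γ_c`. -/
theorem stmt15
    {M N : Type*}
    [NormedAddCommGroup M] [InnerProductSpace ℝ M] [CompleteSpace M]
    [NormedAddCommGroup N] [InnerProductSpace ℝ N] [CompleteSpace N]
    (a : M →ₗ[ℝ] M →ₗ[ℝ] ℝ) (b : M →ₗ[ℝ] N →ₗ[ℝ] ℝ) (c : N →ₗ[ℝ] N →ₗ[ℝ] ℝ)
    (Ca Cb Cc γa γb γc : ℝ)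
    (hCa : 0 < Ca) (hCb : 0 < Cb) (hCc : 0 < Cc)
    (hγa : 0 < γa) (hγb : 0 < γb) (hγc : 0 < γc)
    -- a symmetric positive semi-definite and bounded
    (ha_symm : ∀ u φ, a u φ = a φ u)
    (ha_psd : ∀ u, 0 ≤ a u u)
    (ha_bound : ∀ u φ, a u φ ≤ Ca * ‖u‖ * ‖φ‖)
    -- b bounded
    (hb_bound : ∀ u q, b u q ≤ Cb * ‖u‖ * ‖q‖)
    -- c symmetric positive semi-definite and bounded
    (hc_symm : ∀ p q, c p q = c q p)
    (hc_psd : ∀ q, 0 ≤ c q q)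
    (hc_bound : ∀ p q, c p q ≤ Cc * ‖p‖ * ‖q‖)
    -- a coercive on the kernel Z of b
    (ha_coercive : ∀ u : M, (∀ q : N, b u q = 0) → γa * ‖u‖ ^ 2 ≤ a u u)
    -- c coercive on the kernel K of the adjoint of b
    (hc_coercive : ∀ q : N, (∀ φ : M, b φ q = 0) → γc * ‖q‖ ^ 2 ≤ c q q)
    -- proj q is the orthogonal projection of q onto K^⊥
    (proj : N → N)
    (hproj_ker : ∀ (q : N) (φ : M), b φ (q - proj q) = 0)
    (hproj_orth : ∀ q k : N, (∀ φ : M, b φ k = 0) → ⟪proj q, k⟫ = 0)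
    -- inf-sup condition for b
    (hb_infsup : ∀ q : N, ∀ s : ℝ, (∀ u : M, b u q ≤ s * ‖u‖) → γb * ‖proj q‖ ≤ s) :
    ∃ C > 0, ∀ (f : StrongDual ℝ M) (g : StrongDual ℝ N),
      -- existence
      (∃ (u : M) (p : N), (∀ φ, a u φ + b φ p = f φ) ∧ (∀ q, b u q - c p q = g q)) ∧
      -- uniqueness
      (∀ (u : M) (p : N) (u' : M) (p' : N),
        ((∀ φ, a u φ + b φ p = f φ) ∧ (∀ q, b u q - c p q = g q)) →
        ((∀ φ, a u' φ + b φ p' = f φ) ∧ (∀ q, b u' q - c p' q = g q)) →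
        u = u' ∧ p = p') ∧
      -- stability
      (∀ (u : M) (p : N),
        ((∀ φ, a u φ + b φ p = f φ) ∧ (∀ q, b u q - c p q = g q)) →
        ‖u‖ + ‖p‖ ≤ C * (‖f‖ + ‖g‖)) :=
  stmt15_general a b c Ca Cb Cc γa γb γc hγa hγb hγc ha_symm ha_psd ha_bound hb_bound hc_symm hc_psd
    hc_bound ha_coercive hc_coercive proj hproj_ker hproj_orth hb_infsup
end
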